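/- arXiv:1912.09305 — 7 statements merged into one kernel-verified Lean document; each statement's English description precedes it below -/
import Mathlib

section
/- Let (a_k)_{k∈ℤ} be positive real numbers with finite total sum S = Σ_{k∈ℤ} a_k. Define S_n = Σ_{k∈ℤ} (a_k · a_{k+1} ⋯ a_{k+n-1})^{1/n}. Then S_n converges to 0 as n → ∞. -/
open Filter Finset

lemma gm_le_am {ι : Type*} (I : Finset ι) (hI : I.Nonempty) (x : ι → ℝ)
    (hx : ∀ i ∈ I, 0 ≤ x i) :
    (∏ i ∈ I, x i) ^ ((1:ℝ)/I.card) ≤ (∑ i ∈ I, x i) / I.card := by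
  have hc : (0:ℝ) < I.card := by exact_mod_cast Finset.card_pos.mpr hI
  have h := Real.geom_mean_le_arith_mean_weighted I (fun _ => (1:ℝ)/I.card) x
    (fun i _ => by positivity) (by rw [Finset.sum_const, nsmul_eq_mul]; field_simp) hx
  rw [Real.finset_prod_rpow I x hx] at h
  refine h.trans (le_of_eq ?_)
  rw [Finset.sum_div, Finset.sum_congr rfl]
  intro i _; rw [one_div, inv_mul_eq_div]


lemma psi_tendsto (b c C ε : ℝ) (hC : 1 ≤ C) (hε : 0 < ε) :
    Tendsto (fun n : ℕ => (b + n) * (C ^ (c/(n:ℝ)) * (ε/((n:ℝ)-c)) ^ (((n:ℝ)-c)/(n:ℝ))))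
      atTop (nhds ε) := by
  have hC0 : (0:ℝ) < C := lt_of_lt_of_le one_pos hC
  have hm : Tendsto (fun n : ℕ => (n:ℝ) - c) atTop atTop := by
    simpa [sub_eq_add_neg] using
      tendsto_atTop_add_const_right atTop (-c) (tendsto_natCast_atTop_atTop (R := ℝ))
  have hev : ∀ᶠ n : ℕ in atTop, (0:ℝ) < (n:ℝ) - c ∧ (0:ℝ) < (n:ℝ) := by
    filter_upwards [hm.eventually_gt_atTop 0, eventually_gt_atTop 0] with n h1 h2
    exact ⟨h1, by exact_mod_cast h2⟩
  have h0 : Tendsto (fun n : ℕ => c/(n:ℝ)) atTop (nhds 0) := tendsto_const_div_atTop_nhds_zero_nat c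
  have hF1 : Tendsto (fun n : ℕ => C ^ (c/(n:ℝ))) atTop (nhds 1) := by
    have := ((Real.continuousAt_const_rpow (a := C) (b := 0) (ne_of_gt hC0)).tendsto).comp h0
    simpa [Function.comp_def] using this
  have hF2 : Tendsto (fun n : ℕ => (b + (n:ℝ))/((n:ℝ)-c)) atTop (nhds 1) := by
    have h := tendsto_const_nhds (x := (1:ℝ)) (f := atTop (α := ℕ)) |>.add
      ((tendsto_const_nhds (x := (b+c))).div_atTop hm)
    rw [add_zero] at h
    refine h.congr' ?_
    filter_upwards [hev] with n hn
    obtain ⟨hn1, hn2⟩ := hn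
    field_simp
    ring
  have hlogn : Tendsto (fun n : ℕ => Real.log ((n:ℝ)-c)/(n:ℝ)) atTop (nhds 0) := by
    have h1 : Tendsto (fun n : ℕ => Real.log ((n:ℝ)-c)/((n:ℝ)-c)) atTop (nhds 0) :=
      (Real.isLittleO_log_id_atTop.tendsto_div_nhds_zero).comp hm
    have h2 : Tendsto (fun n : ℕ => ((n:ℝ)-c)/(n:ℝ)) atTop (nhds 1) := by
      have h := tendsto_const_nhds (x := (1:ℝ)) (f := atTop (α := ℕ)) |>.sub h0
      rw [sub_zero] at h
      refine h.congr' ?_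
      filter_upwards [hev] with n hn
      obtain ⟨hn1, hn2⟩ := hn
      field_simp
    have := h1.mul h2
    rw [zero_mul] at this
    refine this.congr' ?_
    filter_upwards [hev] with n hn
    obtain ⟨hn1, hn2⟩ := hn
    rw [div_mul_div_comm, div_eq_div_iff (by positivity) (by positivity)]
    ring
  have hF3 : Tendsto (fun n : ℕ => (((n:ℝ)-c)/ε) ^ (c/(n:ℝ))) atTop (nhds 1) := by
    have hexp : Tendsto (fun n : ℕ => Real.log (((n:ℝ)-c)/ε) * (c/(n:ℝ))) atTop (nhds 0) := by
      have h1 : Tendsto (fun n : ℕ => (Real.log ((n:ℝ)-c) - Real.log ε) * (c/(n:ℝ)))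
          atTop (nhds 0) := by
        have ha : Tendsto (fun n : ℕ => Real.log ((n:ℝ)-c) * (c/(n:ℝ))) atTop (nhds 0) := by
          have := hlogn.mul_const c
          rw [zero_mul] at this
          refine this.congr fun n => by ring
        have hb : Tendsto (fun n : ℕ => Real.log ε * (c/(n:ℝ))) atTop (nhds 0) := by
          have := h0.const_mul (Real.log ε)
          rwa [mul_zero] at this
        have := ha.sub hb
        rw [sub_zero] at this
        refine this.congr fun n => by ring
      refine h1.congr' ?_
      filter_upwards [hev] with n hn
      obtain ⟨hn1, hn2⟩ := hn
      rw [Real.log_div (by positivity) (by positivity)]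
    have := (Real.continuous_exp.continuousAt (x := 0)).tendsto.comp hexp
    rw [Real.exp_zero] at this
    refine this.congr' ?_
    filter_upwards [hev] with n hn
    obtain ⟨hn1, hn2⟩ := hn
    simp only [Function.comp]
    rw [Real.rpow_def_of_pos (by positivity)]
  have hF : Tendsto (fun n : ℕ =>
      C ^ (c/(n:ℝ)) * ((b + (n:ℝ))/((n:ℝ)-c)) * (((n:ℝ)-c)/ε) ^ (c/(n:ℝ)) * ε)
      atTop (nhds ε) := by
    have := ((hF1.mul hF2).mul hF3).mul_const ε
    rwa [one_mul, one_mul, one_mul] at this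
  refine hF.congr' ?_
  filter_upwards [hev] with n hn
  obtain ⟨hn1, hn2⟩ := hn
  have hx : (0:ℝ) < ε/((n:ℝ)-c) := by positivity
  have key : (ε/((n:ℝ)-c)) ^ (((n:ℝ)-c)/(n:ℝ))
      = (ε/((n:ℝ)-c)) * (((n:ℝ)-c)/ε) ^ (c/(n:ℝ)) := by
    have h1 : ((n:ℝ)-c)/(n:ℝ) = 1 - c/(n:ℝ) := by field_simp
    rw [h1, Real.rpow_sub hx, Real.rpow_one, div_eq_mul_inv (ε/((n:ℝ)-c)),
      ← Real.inv_rpow hx.le, inv_div]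
  rw [key]
  have hxp : (0:ℝ) ≤ (((n:ℝ)-c)/ε) ^ (c/(n:ℝ)) := Real.rpow_nonneg (by positivity) _
  field_simp

set_option maxHeartbeats 1000000 in
/-- If `(a k)_{k ∈ ℤ}` are positive reals with finite total sum, then
`S n = ∑_{k} (a k ⋯ a (k+n-1))^{1/n}` tends to `0` as `n → ∞`. -/
theorem stmt_0 (a : ℤ → ℝ) (hpos : ∀ k, 0 < a k) (hsum : Summable a) :
    Tendsto (fun n : ℕ =>
        ∑' k : ℤ, (∏ i ∈ Finset.range n, a (k + (i : ℤ))) ^ ((1 : ℝ) / n))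
      atTop (nhds 0) := by
  set t : ℕ → ℤ → ℝ := fun n k => (∏ i ∈ Finset.range n, a (k + (i : ℤ))) ^ ((1 : ℝ) / n)
    with ht
  have ht0 : ∀ n k, 0 ≤ t n k := fun n k =>
    Real.rpow_nonneg (Finset.prod_nonneg fun i _ => (hpos _).le) _
  have hA : ∀ j, a j ≤ ∑' j, a j := fun j => Summable.le_tsum hsum j fun _ _ => (hpos _).le
  set A := ∑' j, a j with hAdef
  set C := max A 1 with hCdef
  have hC1 : (1:ℝ) ≤ C := le_max_right _ _
  have hC0 : (0:ℝ) < C := lt_of_lt_of_le one_pos hC1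
  have haC : ∀ j, a j ≤ C := fun j => (hA j).trans (le_max_left _ _)
  have hshift : ∀ i : ℤ, Summable fun k : ℤ => a (k + i) := fun i =>
    hsum.comp_injective (add_left_injective i)
  have hAM : ∀ n : ℕ, 0 < n → ∀ k, t n k ≤ (∑ i ∈ Finset.range n, a (k + (i:ℤ))) / n := by
    intro n hn k
    have := gm_le_am (Finset.range n) (Finset.nonempty_range_iff.mpr hn.ne')
      (fun i => a (k + (i:ℤ))) (fun i _ => (hpos _).le)
    rwa [Finset.card_range] at this
  have hts : ∀ n : ℕ, 0 < n → Summable (t n) := fun n hn =>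
    Summable.of_nonneg_of_le (ht0 n) (hAM n hn)
      ((summable_sum fun (i : ℕ) (_ : i ∈ Finset.range n) => hshift (i:ℤ)).div_const n)
  rw [Metric.tendsto_atTop]
  intro ε₀ hε₀
  set ε := ε₀/4 with hεdef
  have hε : 0 < ε := by positivity
  -- choose the finite set s capturing most of the mass
  obtain ⟨s, hs⟩ : ∃ s : Finset ℤ, A - ε < ∑ j ∈ s, a j :=
    (hsum.hasSum.eventually (eventually_gt_nhds (by linarith))).exists
  set N := s.sup fun k => k.natAbs with hNdef
  have hNs : ∀ j ∈ s, |j| ≤ (N:ℤ) := by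
    intro j hj
    rw [Int.abs_eq_natAbs]
    exact_mod_cast Finset.le_sup (f := fun k : ℤ => k.natAbs) hj
  set f' : ℤ → ℝ := fun j => if (N:ℤ) < |j| then a j else 0 with hf'def
  have hf'0 : ∀ j, 0 ≤ f' j := by
    intro j; simp only [hf'def]; split_ifs; exacts [(hpos _).le, le_refl _]
  have hf'le : ∀ j, f' j ≤ a j := by
    intro j; simp only [hf'def]; split_ifs; exacts [le_refl _, (hpos _).le]
  have hf'sum : Summable f' := Summable.of_nonneg_of_le hf'0 hf'le hsum
  have hεN : ∑' j, f' j ≤ ε := by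
    set g' : ℤ → ℝ := fun j => if j ∈ s then 0 else a j with hg'def
    have hg'0 : ∀ j, 0 ≤ g' j := by
      intro j; simp only [hg'def]; split_ifs; exacts [le_refl _, (hpos _).le]
    have hg'le : ∀ j, g' j ≤ a j := by
      intro j; simp only [hg'def]; split_ifs; exacts [(hpos _).le, le_refl _]
    have hg'sum : Summable g' := Summable.of_nonneg_of_le hg'0 hg'le hsum
    have hh : Summable (fun j => if j ∈ s then a j else 0) :=
      Summable.of_nonneg_of_le (fun j => by split_ifs; exacts [(hpos _).le, le_refl _])
        (fun j => by split_ifs; exacts [le_refl _, (hpos _).le]) hsum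
    have hsplit : A = (∑' j, g' j) + ∑' j, (if j ∈ s then a j else 0) := by
      rw [← Summable.tsum_add hg'sum hh]
      refine tsum_congr fun j => ?_
      simp only [hg'def]; split_ifs <;> ring
    have hhs : (∑' j, (if j ∈ s then a j else 0)) = ∑ j ∈ s, a j := by
      rw [tsum_eq_sum (s := s) (fun j hj => if_neg hj)]
      exact Finset.sum_congr rfl fun j hj => if_pos hj
    have h1 : (∑' j, g' j) < ε := by
      rw [hhs] at hsplit
      rw [hsplit] at hs
      linarith
    have hf'leg : ∀ j, f' j ≤ g' j := by
      intro j
      simp only [hf'def, hg'def]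
      by_cases hj : (N:ℤ) < |j|
      · have hjs : j ∉ s := fun hmem => absurd (hNs j hmem) (not_le.mpr hj)
        rw [if_pos hj, if_neg hjs]
      · rw [if_neg hj]
        split_ifs
        exacts [le_refl _, (hpos _).le]
    refine le_trans (Summable.tsum_le_tsum hf'leg hf'sum hg'sum) h1.le
  -- eventual bound via psi_tendsto
  have hψev : ∀ᶠ n : ℕ in atTop,
      (2*(N:ℝ) + n) * (C ^ ((2*(N:ℝ)+1)/(n:ℝ)) *
        (ε/((n:ℝ)-(2*(N:ℝ)+1))) ^ (((n:ℝ)-(2*(N:ℝ)+1))/(n:ℝ))) ≤ 2*ε :=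
    (psi_tendsto (2*N) (2*(N:ℝ)+1) C ε hC1 hε).eventually (eventually_le_nhds (by linarith))
  have hncond : ∀ᶠ n : ℕ in atTop, 2*N+2 ≤ n ∧ (2*(N:ℝ)+1+ε ≤ (n:ℝ)) := by
    filter_upwards [eventually_ge_atTop (2*N+2),
      (tendsto_natCast_atTop_atTop (R := ℝ)).eventually_ge_atTop (2*(N:ℝ)+1+ε)] with n h1 h2
    exact ⟨h1, h2⟩
  obtain ⟨n₀, hn₀⟩ := Filter.eventually_atTop.mp (hψev.and hncond)
  refine ⟨n₀, fun n hn => ?_⟩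
  obtain ⟨hψn, hn2, hnε⟩ := hn₀ n hn
  set c : ℝ := 2*(N:ℝ)+1 with hcdef
  set m : ℝ := (n:ℝ) - c with hmdef
  have hn0 : 0 < n := by omega
  have hn0' : (0:ℝ) < n := by exact_mod_cast hn0
  have hn2' : (2*(N:ℝ)+2) ≤ (n:ℝ) := by exact_mod_cast hn2
  have hm0 : 0 < m := by rw [hmdef, hcdef]; linarith
  have hεm : ε ≤ m := by rw [hmdef, hcdef]; linarith
  -- uniform per-term bound
  have bmid : ∀ k : ℤ, t n k ≤ C ^ (c/(n:ℝ)) * (ε/m) ^ (m/(n:ℝ)) := by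
    intro k
    set J := (Finset.range n).filter (fun i : ℕ => |k + (i:ℤ)| ≤ (N:ℤ)) with hJdef
    set I := (Finset.range n).filter (fun i : ℕ => ¬ |k + (i:ℤ)| ≤ (N:ℤ)) with hIdef
    have hinj : Function.Injective (fun i : ℕ => k + (i:ℤ)) := by
      intro x y hxy
      simp only [add_right_inj, Nat.cast_inj] at hxy
      exact hxy
    have hJcard : J.card ≤ 2*N+1 := by
      have h1 : J.card = (J.image fun i : ℕ => k + (i:ℤ)).card :=
        (Finset.card_image_of_injective J hinj).symm
      have h2 : (J.image fun i : ℕ => k + (i:ℤ)) ⊆ Finset.Icc (-(N:ℤ)) N := by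
        intro j hj
        simp only [Finset.mem_image] at hj
        obtain ⟨i, hi, rfl⟩ := hj
        rw [hJdef, Finset.mem_filter] at hi
        rw [Finset.mem_Icc]
        constructor
        · linarith [(abs_le.mp hi.2).1]
        · linarith [(abs_le.mp hi.2).2]
      have h3 := Finset.card_le_card h2
      rw [Int.card_Icc] at h3
      rw [h1]
      omega
    have hcards : J.card + I.card = n := by
      rw [hJdef, hIdef, Finset.card_filter_add_card_filter_not, Finset.card_range]
    have hq1 : 1 ≤ I.card := by omega
    have hIne : I.Nonempty := Finset.card_pos.mp (by omega)
    have hIc0 : (0:ℝ) < I.card := by exact_mod_cast hq1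
    have hqm : m ≤ (I.card:ℝ) := by
      have ha1 : (J.card:ℝ) ≤ 2*(N:ℝ)+1 := by exact_mod_cast hJcard
      have h4 : (J.card:ℝ) + (I.card:ℝ) = (n:ℝ) := by exact_mod_cast hcards
      rw [hmdef, hcdef]; linarith
    have hsumI : ∑ i ∈ I, a (k + (i:ℤ)) ≤ ε := by
      have h1 : ∀ i ∈ I, a (k + (i:ℤ)) = f' (k + (i:ℤ)) := by
        intro i hi
        rw [hIdef, Finset.mem_filter] at hi
        simp only [hf'def]
        rw [if_pos (not_le.mp hi.2)]
      rw [Finset.sum_congr rfl h1,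
        ← Finset.sum_image (f := f') (g := fun i : ℕ => k + (i:ℤ)) (fun x _ y _ h => hinj h)]
      exact le_trans (Summable.sum_le_tsum _ (fun j _ => hf'0 j) hf'sum) hεN
    set P := ∏ i ∈ I, a (k + (i:ℤ)) with hPdef
    have hP0 : 0 < P := Finset.prod_pos fun i _ => hpos _
    have hgm := gm_le_am I hIne (fun i => a (k + (i:ℤ))) (fun i _ => (hpos _).le)
    have hgm2 : P ^ ((1:ℝ)/I.card) ≤ ε/I.card := by
      refine hgm.trans ?_
      gcongr
    have hPle : P ≤ (ε/I.card) ^ (I.card : ℕ) := by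
      have hid : P = (P ^ ((1:ℝ)/I.card)) ^ (I.card : ℕ) := by
        rw [← Real.rpow_natCast (P ^ ((1:ℝ)/I.card)) I.card, ← Real.rpow_mul hP0.le,
          one_div, inv_mul_cancel₀ (ne_of_gt hIc0), Real.rpow_one]
      rw [hid]
      exact pow_le_pow_left₀ (Real.rpow_nonneg hP0.le _) hgm2 _
    have hsplitP : (∏ i ∈ Finset.range n, a (k + (i:ℤ))) = (∏ i ∈ J, a (k+(i:ℤ))) * P := by
      rw [hPdef, hJdef, hIdef, Finset.prod_filter_mul_prod_filter_not]
    have hprodJ0 : 0 ≤ ∏ i ∈ J, a (k+(i:ℤ)) := Finset.prod_nonneg fun i _ => (hpos _).le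
    have htnk : t n k = (∏ i ∈ J, a (k+(i:ℤ))) ^ ((1:ℝ)/n) * P ^ ((1:ℝ)/n) := by
      rw [ht]
      simp only
      rw [hsplitP, Real.mul_rpow hprodJ0 hP0.le]
    have hJb : (∏ i ∈ J, a (k+(i:ℤ))) ^ ((1:ℝ)/n) ≤ C ^ (c/(n:ℝ)) := by
      have h1 : (∏ i ∈ J, a (k+(i:ℤ))) ≤ C ^ (J.card) := by
        calc (∏ i ∈ J, a (k+(i:ℤ))) ≤ ∏ _i ∈ J, C :=
              Finset.prod_le_prod (fun i _ => (hpos _).le) (fun i _ => haC _)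
          _ = C ^ J.card := Finset.prod_const C
      have h2 : (∏ i ∈ J, a (k+(i:ℤ))) ^ ((1:ℝ)/n) ≤ (C ^ (J.card:ℕ)) ^ ((1:ℝ)/n) :=
        Real.rpow_le_rpow hprodJ0 h1 (by positivity)
      refine h2.trans ?_
      rw [← Real.rpow_natCast C J.card, ← Real.rpow_mul hC0.le, mul_one_div]
      refine Real.rpow_le_rpow_of_exponent_le hC1 ?_
      have : (J.card:ℝ) ≤ c := by rw [hcdef]; exact_mod_cast hJcard
      gcongr
    have hIb : P ^ ((1:ℝ)/n) ≤ (ε/m) ^ (m/(n:ℝ)) := by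
      have h2 : P ^ ((1:ℝ)/n) ≤ ((ε/I.card) ^ (I.card:ℕ)) ^ ((1:ℝ)/n) :=
        Real.rpow_le_rpow hP0.le hPle (by positivity)
      refine h2.trans ?_
      rw [← Real.rpow_natCast (ε/(I.card:ℝ)) I.card, ← Real.rpow_mul (by positivity),
        mul_one_div]
      have h3 : (ε/(I.card:ℝ)) ^ ((I.card:ℝ)/(n:ℝ)) ≤ (ε/m) ^ ((I.card:ℝ)/(n:ℝ)) := by
        refine Real.rpow_le_rpow (by positivity) (by gcongr) (by positivity)
      refine h3.trans ?_
      refine Real.rpow_le_rpow_of_exponent_ge (by positivity) ?_ ?_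
      · rw [div_le_one hm0]; exact hεm
      · gcongr
    rw [htnk]
    exact mul_le_mul hJb hIb (Real.rpow_nonneg hP0.le _) (Real.rpow_nonneg hC0.le _)
  -- the central window set
  set T := Finset.Icc (-(N:ℤ) - n + 1) (N:ℤ) with hTdef
  have hTcard : (T.card : ℝ) = 2*(N:ℝ) + n := by
    rw [hTdef, Int.card_Icc]
    have h1 : ((N:ℤ) + 1 - (-(N:ℤ) - n + 1)) = (2*(N:ℤ) + n) := by ring
    rw [h1]
    have h2 : ((2*(N:ℤ) + n).toNat) = 2*N + n := by omega
    rw [h2]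
    push_cast
    ring
  have hmid : ∑ k ∈ T, t n k ≤ (2*(N:ℝ) + n) * (C ^ (c/(n:ℝ)) * (ε/m) ^ (m/(n:ℝ))) := by
    have h := Finset.sum_le_card_nsmul T (t n) _ (fun k _ => bmid k)
    rwa [nsmul_eq_mul, hTcard] at h
  -- tail estimate
  have hu : ∀ i : ℕ, Summable (fun k : ℤ => if k ∈ T then 0 else a (k + (i:ℤ))) := by
    intro i
    refine Summable.of_nonneg_of_le (fun k => ?_) (fun k => ?_) (hshift (i:ℤ))
    · split_ifs; exacts [le_refl _, (hpos _).le]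
    · split_ifs; exacts [(hpos _).le, le_refl _]
  have hgle : ∀ k : ℤ, (if k ∈ T then 0 else t n k)
      ≤ (1/(n:ℝ)) * ∑ i ∈ Finset.range n, (if k ∈ T then 0 else a (k + (i:ℤ))) := by
    intro k
    by_cases hk : k ∈ T
    · simp [hk]
    · simp only [if_neg hk]
      calc t n k ≤ (∑ i ∈ Finset.range n, a (k+(i:ℤ)))/n := hAM n hn0 k
        _ = (1/(n:ℝ)) * ∑ i ∈ Finset.range n, a (k+(i:ℤ)) := by ring
  have hsum2 : Summable (fun k : ℤ =>
      (1/(n:ℝ)) * ∑ i ∈ Finset.range n, (if k ∈ T then 0 else a (k + (i:ℤ)))) :=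
    (summable_sum fun i _ => hu i).mul_left _
  have hg0 : ∀ k : ℤ, 0 ≤ (if k ∈ T then 0 else t n k) := fun k => by
    split_ifs; exacts [le_refl _, ht0 n k]
  have hgsum : Summable (fun k : ℤ => if k ∈ T then 0 else t n k) :=
    Summable.of_nonneg_of_le hg0 hgle hsum2
  have hukey : ∀ i ∈ Finset.range n, ∀ k : ℤ,
      (if k ∈ T then 0 else a (k + (i:ℤ))) ≤ f' (k + (i:ℤ)) := by
    intro i hi k
    split_ifs with hk
    · exact hf'0 _
    · have hik : (N:ℤ) < |k + (i:ℤ)| := by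
        rw [hTdef, Finset.mem_Icc, not_and_or, not_le, not_le] at hk
        rw [Finset.mem_range] at hi
        have hi' : (i:ℤ) < n := by exact_mod_cast hi
        have hi0 : (0:ℤ) ≤ (i:ℤ) := Int.natCast_nonneg i
        rcases hk with hk | hk
        · refine lt_abs.mpr (Or.inr ?_); omega
        · refine lt_abs.mpr (Or.inl ?_); omega
      simp only [hf'def, if_pos hik]
      exact le_refl _
  have htail : (∑' k : ℤ, (if k ∈ T then 0 else t n k)) ≤ ε := by
    calc (∑' k : ℤ, (if k ∈ T then 0 else t n k))
        ≤ ∑' k : ℤ, (1/(n:ℝ)) * ∑ i ∈ Finset.range n, (if k ∈ T then 0 else a (k+(i:ℤ))) :=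
          Summable.tsum_le_tsum hgle hgsum hsum2
      _ = (1/(n:ℝ)) * ∑' k : ℤ, ∑ i ∈ Finset.range n, (if k ∈ T then 0 else a (k+(i:ℤ))) :=
          by rw [tsum_mul_left]
      _ = (1/(n:ℝ)) * ∑ i ∈ Finset.range n, ∑' k : ℤ, (if k ∈ T then 0 else a (k+(i:ℤ))) := by
          rw [Summable.tsum_finsetSum fun i _ => hu i]
      _ ≤ (1/(n:ℝ)) * ∑ i ∈ Finset.range n, ε := by
          gcongr with i hi
          calc (∑' k : ℤ, (if k ∈ T then 0 else a (k+(i:ℤ))))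
              ≤ ∑' k : ℤ, f' (k + (i:ℤ)) :=
                Summable.tsum_le_tsum (hukey i hi) (hu i)
                  (hf'sum.comp_injective (add_left_injective (i:ℤ)))
            _ = ∑' j : ℤ, f' j := (Equiv.addRight (i:ℤ)).tsum_eq f'
            _ ≤ ε := hεN
      _ = ε := by
          rw [Finset.sum_const, Finset.card_range, nsmul_eq_mul]
          field_simp
  -- split the total sum
  have hite1 : Summable (fun k : ℤ => if k ∈ T then t n k else 0) :=
    Summable.of_nonneg_of_le
      (fun k => by split_ifs; exacts [ht0 n k, le_refl _])
      (fun k => by split_ifs; exacts [le_refl _, ht0 n k]) (hts n hn0)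
  have hsplitS : (∑' k : ℤ, t n k)
      = (∑ k ∈ T, t n k) + ∑' k : ℤ, (if k ∈ T then 0 else t n k) := by
    calc (∑' k : ℤ, t n k)
        = ∑' k : ℤ, ((if k ∈ T then t n k else 0) + (if k ∈ T then 0 else t n k)) :=
          tsum_congr fun k => by split_ifs <;> ring
      _ = (∑' k : ℤ, (if k ∈ T then t n k else 0))
          + ∑' k : ℤ, (if k ∈ T then 0 else t n k) := Summable.tsum_add hite1 hgsum
      _ = (∑ k ∈ T, t n k) + ∑' k : ℤ, (if k ∈ T then 0 else t n k) := by
          rw [tsum_eq_sum (s := T) (fun k hk => if_neg hk)]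
          congr 1
          exact Finset.sum_congr rfl fun k hk => if_pos hk
  have hfinal : (∑' k : ℤ, t n k) ≤ 3*ε := by
    rw [hsplitS]
    have h1 : ∑ k ∈ T, t n k ≤ 2*ε := hmid.trans hψn
    linarith
  show dist (∑' k : ℤ, t n k) 0 < ε₀
  rw [Real.dist_eq, sub_zero, abs_of_nonneg (tsum_nonneg fun k => ht0 n k)]
  rw [hεdef] at hfinal
  linarith
end

section
/- Let (a_k)_{k∈ℤ} be positive real numbers with finite total sum, and set S_n = Σ_{k∈ℤ} (a_k ⋯ a_{k+n-1})^{1/n}. Then the sequence n·S_n is subadditive: (m+n)·S_{m+n} ≤ m·S_m + n·S_n for all m, n ≥ 1. -/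
open Filter

set_option maxHeartbeats 1000000 in
/-- Subadditivity of `n * S n` where `S n = ∑_{k ∈ ℤ} (a k ⋯ a (k+n-1))^{1/n}` for a
positive summable family `(a k)_{k ∈ ℤ}`:  `(m+n) S_{m+n} ≤ m S_m + n S_n`. -/
theorem stmt_1 (a : ℤ → ℝ) (hpos : ∀ k, 0 < a k) (hsum : Summable a)
    (hS : ∀ n : ℕ, 1 ≤ n →
      Summable (fun k : ℤ => (∏ i ∈ Finset.range n, a (k + (i : ℤ))) ^ ((1 : ℝ) / n)))
    (m n : ℕ) (hm : 1 ≤ m) (hn : 1 ≤ n) :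
    ((m : ℝ) + n) *
        ∑' k : ℤ, (∏ i ∈ Finset.range (m + n), a (k + (i : ℤ))) ^ ((1 : ℝ) / (m + n))
      ≤ (m : ℝ) * ∑' k : ℤ, (∏ i ∈ Finset.range m, a (k + (i : ℤ))) ^ ((1 : ℝ) / m)
        + (n : ℝ) * ∑' k : ℤ, (∏ i ∈ Finset.range n, a (k + (i : ℤ))) ^ ((1 : ℝ) / n) := by
  set f : ℤ → ℝ := fun k => (∏ i ∈ Finset.range (m + n), a (k + (i : ℤ))) ^ ((1 : ℝ) / (m + n))
    with hf
  set g : ℤ → ℝ := fun k => (∏ i ∈ Finset.range m, a (k + (i : ℤ))) ^ ((1 : ℝ) / m) with hg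
  set h : ℤ → ℝ := fun k => (∏ i ∈ Finset.range n, a (k + (i : ℤ))) ^ ((1 : ℝ) / n) with hh
  have hm0 : (0 : ℝ) < m := by exact_mod_cast hm
  have hn0 : (0 : ℝ) < n := by exact_mod_cast hn
  have hmn0 : (0 : ℝ) < m + n := by linarith
  set w₁ : ℝ := m / (m + n) with hw₁
  set w₂ : ℝ := n / (m + n) with hw₂
  have hw1 : 0 ≤ w₁ := by positivity
  have hw2 : 0 ≤ w₂ := by positivity
  have hwsum : w₁ + w₂ = 1 := by rw [hw₁, hw₂]; field_simp
  -- pointwise inequality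
  have key : ∀ k : ℤ, f k ≤ w₁ * g k + w₂ * h (k + m) := by
    intro k
    have hP : (0 : ℝ) < ∏ i ∈ Finset.range m, a (k + (i : ℤ)) :=
      Finset.prod_pos fun i _ => hpos _
    have hQ : (0 : ℝ) < ∏ i ∈ Finset.range n, a (k + (m : ℤ) + (i : ℤ)) :=
      Finset.prod_pos fun i _ => hpos _
    have hsplit : (∏ i ∈ Finset.range (m + n), a (k + (i : ℤ)))
        = (∏ i ∈ Finset.range m, a (k + (i : ℤ)))
          * ∏ i ∈ Finset.range n, a (k + (m : ℤ) + (i : ℤ)) := by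
      rw [Finset.prod_range_add]
      congr 1
      refine Finset.prod_congr rfl fun i _ => ?_
      congr 1
      push_cast
      ring
    have h1 : f k = (g k) ^ w₁ * (h (k + m)) ^ w₂ := by
      have e1 : ((1:ℝ)/m) * w₁ = 1/((m:ℝ)+n) := by rw [hw₁]; field_simp
      have e2 : ((1:ℝ)/n) * w₂ = 1/((m:ℝ)+n) := by rw [hw₂]; field_simp
      simp only [hf, hg, hh]
      rw [hsplit, Real.mul_rpow hP.le hQ.le, ← Real.rpow_mul hP.le, ← Real.rpow_mul hQ.le,
        e1, e2]
    rw [h1]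
    exact Real.geom_mean_le_arith_mean2_weighted hw1 hw2
      (Real.rpow_nonneg hP.le _) (Real.rpow_nonneg hQ.le _) hwsum
  have hgsum := hS m hm
  have hhsum := hS n hn
  have hhsum' : Summable (fun k : ℤ => h (k + (m : ℤ))) :=
    ((Equiv.addRight (m : ℤ)).summable_iff (f := h)).mpr hhsum
  have htsum_shift : ∑' k : ℤ, h (k + (m : ℤ)) = ∑' k : ℤ, h k :=
    (Equiv.addRight (m : ℤ)).tsum_eq h
  have hrhs : Summable (fun k : ℤ => w₁ * g k + w₂ * h (k + (m : ℤ))) :=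
    ((hgsum.mul_left w₁).add (hhsum'.mul_left w₂))
  have hfsum : Summable f := by
    have := hS (m + n) (le_trans hm (Nat.le_add_right m n))
    push_cast at this
    exact this
  have hle : ∑' k : ℤ, f k ≤ ∑' k : ℤ, (w₁ * g k + w₂ * h (k + (m : ℤ))) :=
    Summable.tsum_le_tsum key hfsum hrhs
  have heq : ∑' k : ℤ, (w₁ * g k + w₂ * h (k + (m : ℤ)))
      = w₁ * ∑' k, g k + w₂ * ∑' k, h k := by
    rw [Summable.tsum_add (hgsum.mul_left w₁) (hhsum'.mul_left w₂), tsum_mul_left, tsum_mul_left,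
      htsum_shift]
  have : ((m : ℝ) + n) * ∑' k, f k ≤ ((m : ℝ) + n) * (w₁ * ∑' k, g k + w₂ * ∑' k, h k) := by
    rw [← heq]; exact mul_le_mul_of_nonneg_left (heq ▸ hle) hmn0.le
  calc ((m : ℝ) + n) * ∑' k, f k ≤ ((m : ℝ) + n) * (w₁ * ∑' k, g k + w₂ * ∑' k, h k) := this
    _ = (m : ℝ) * ∑' k, g k + (n : ℝ) * ∑' k, h k := by
        rw [hw₁, hw₂]; field_simp
end

section
/- Let (a_k)_{k∈ℤ} be positive real numbers whose total sum is finite, and suppose a_{k+1}/a_k → 1 as k → ±∞. Then for each fixed k₀ ∈ ℤ, the quantity (a_{k₀} ⋯ a_{k₀+n-1})^{1/n} / Σ_{k∈ℤ} (a_k ⋯ a_{k+n-1})^{1/n} converges to 0 as n → ∞. -/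
open Filter Finset

/-- If the ratio of consecutive terms of a positive sequence tends to `1`, then
`log (c n) / n → 0`. -/
lemma aux_log_div (c : ℕ → ℝ) (hc : ∀ m, 0 < c m)
    (h : Tendsto (fun m : ℕ => c (m + 1) / c m) atTop (nhds 1)) :
    Tendsto (fun n : ℕ => Real.log (c n) / n) atTop (nhds 0) := by
  have hd : Tendsto (fun m : ℕ => Real.log (c (m + 1)) - Real.log (c m)) atTop (nhds 0) := by
    have h2 := h.log one_ne_zero
    simp only [Real.log_one] at h2
    refine h2.congr fun m => ?_
    rw [Real.log_div (hc _).ne' (hc _).ne']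
  have hces := hd.cesaro
  have h1 : Tendsto (fun n : ℕ => (n⁻¹ : ℝ) * (Real.log (c n) - Real.log (c 0)))
      atTop (nhds 0) := by
    refine hces.congr fun n => ?_
    rw [Finset.sum_range_sub (fun m => Real.log (c m))]
  have h2 : Tendsto (fun n : ℕ => (n⁻¹ : ℝ) * Real.log (c 0)) atTop (nhds 0) := by
    simpa using (tendsto_inv_atTop_nhds_zero_nat (𝕜 := ℝ)).mul_const (Real.log (c 0))
  have h3 := h1.add h2
  rw [add_zero] at h3
  refine h3.congr fun n => ?_
  rw [div_eq_inv_mul]; ring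

/-- Shifted version: `log (c (n+i)) / n → 0`. -/
lemma aux_log_div_shift (c : ℕ → ℝ) (hc : ∀ m, 0 < c m)
    (h : Tendsto (fun m : ℕ => c (m + 1) / c m) atTop (nhds 1)) (i : ℕ) :
    Tendsto (fun n : ℕ => Real.log (c (n + i)) / n) atTop (nhds 0) := by
  have h1 : Tendsto (fun n : ℕ => Real.log (c (n + i)) / (n + i : ℝ)) atTop (nhds 0) := by
    have := (aux_log_div c hc h).comp (tendsto_add_atTop_nat i)
    refine this.congr fun n => ?_
    simp [Function.comp]
  have h2 : Tendsto (fun n : ℕ => ((n : ℝ) + i) / n) atTop (nhds 1) := by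
    have : Tendsto (fun n : ℕ => 1 + (i : ℝ) / n) atTop (nhds (1 + 0)) :=
      tendsto_const_nhds.add (tendsto_const_div_atTop_nhds_zero_nat (i : ℝ))
    rw [add_zero] at this
    refine this.congr' ?_
    filter_upwards [eventually_gt_atTop 0] with n hn
    field_simp
  have h3 := h1.mul h2
  rw [zero_mul] at h3
  refine h3.congr' ?_
  filter_upwards [eventually_gt_atTop 0] with n hn
  have hn' : (n : ℝ) ≠ 0 := Nat.cast_ne_zero.mpr hn.ne'
  have hni : (n : ℝ) + i ≠ 0 := by positivity
  field_simp

/-- Key ratio lemma: the `j`-shifted geometric mean divided by the original one tends to 1. -/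
lemma aux_ratio (c : ℕ → ℝ) (hc : ∀ m, 0 < c m)
    (h : Tendsto (fun m : ℕ => c (m + 1) / c m) atTop (nhds 1)) (j : ℕ) :
    Tendsto (fun n : ℕ =>
      (∏ i ∈ range n, c (j + i)) ^ ((1:ℝ)/n) / (∏ i ∈ range n, c i) ^ ((1:ℝ)/n))
      atTop (nhds 1) := by
  have hL : Tendsto (fun n : ℕ => ∑ i ∈ range j,
      (Real.log (c (n + i)) / n - Real.log (c i) / n)) atTop (nhds 0) := by
    have := tendsto_finset_sum (range j) (fun i _ =>
      (aux_log_div_shift c hc h i).sub (tendsto_const_div_atTop_nhds_zero_nat (Real.log (c i))))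
    simpa using this
  have hexp := (Real.continuous_exp.tendsto 0).comp hL
  rw [Real.exp_zero] at hexp
  refine hexp.congr' ?_
  filter_upwards [eventually_ge_atTop 1] with n hn
  have hn' : (n : ℝ) ≠ 0 := Nat.cast_ne_zero.mpr (by omega)
  have hp1 : 0 < ∏ i ∈ range n, c (j + i) := Finset.prod_pos fun i _ => hc _
  have hp2 : 0 < ∏ i ∈ range n, c i := Finset.prod_pos fun i _ => hc _
  have hratio : 0 < (∏ i ∈ range n, c (j + i)) ^ ((1:ℝ)/n) / (∏ i ∈ range n, c i) ^ ((1:ℝ)/n) :=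
    div_pos (Real.rpow_pos_of_pos hp1 _) (Real.rpow_pos_of_pos hp2 _)
  simp only [Function.comp_apply]
  rw [← Real.exp_log hratio]
  refine congrArg Real.exp ?_
  rw [Real.log_div (Real.rpow_pos_of_pos hp1 _).ne' (Real.rpow_pos_of_pos hp2 _).ne',
    Real.log_rpow hp1, Real.log_rpow hp2,
    Real.log_prod (fun i _ => (hc _).ne'), Real.log_prod (fun i _ => (hc _).ne')]
  have e1 := Finset.sum_range_add (fun m => Real.log (c m)) j n
  have e2 := Finset.sum_range_add (fun m => Real.log (c m)) n j
  rw [Nat.add_comm j n] at e1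
  have e3 : (∑ i ∈ range j, Real.log (c (n + i))) - ∑ i ∈ range j, Real.log (c i)
      = (∑ i ∈ range n, Real.log (c (j + i))) - ∑ i ∈ range n, Real.log (c i) := by
    linarith [e1, e2]
  rw [Finset.sum_sub_distrib, ← Finset.sum_div, ← Finset.sum_div]
  field_simp
  linarith [e3]

/-- If `(a k)_{k ∈ ℤ}` is positive, summable, and `a (k+1) / a k → 1` as `k → ±∞`, then for
every fixed `k₀`, `(a k₀ ⋯ a (k₀+n-1))^{1/n} / ∑_k (a k ⋯ a (k+n-1))^{1/n} → 0` as `n → ∞`. -/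
theorem stmt_2 (a : ℤ → ℝ) (hpos : ∀ k, 0 < a k) (hsum : Summable a)
    (htop : Tendsto (fun k : ℤ => a (k + 1) / a k) atTop (nhds 1))
    (hbot : Tendsto (fun k : ℤ => a (k + 1) / a k) atBot (nhds 1))
    (k₀ : ℤ) :
    Tendsto (fun n : ℕ =>
        (∏ i ∈ Finset.range n, a (k₀ + (i : ℤ))) ^ ((1 : ℝ) / n)
          / ∑' k : ℤ, (∏ i ∈ Finset.range n, a (k + (i : ℤ))) ^ ((1 : ℝ) / n))
      atTop (nhds 0) := by
  set b : ℕ → ℤ → ℝ := fun n k => (∏ i ∈ Finset.range n, a (k + (i : ℤ))) ^ ((1 : ℝ) / n)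
    with hb_def
  set c : ℕ → ℝ := fun m => a (k₀ + (m : ℤ)) with hc_def
  have hcpos : ∀ m, 0 < c m := fun m => hpos _
  have hcrat : Tendsto (fun m : ℕ => c (m + 1) / c m) atTop (nhds 1) := by
    have hmap : Tendsto (fun m : ℕ => k₀ + (m : ℤ)) atTop atTop :=
      tendsto_atTop_add_const_left _ _ tendsto_natCast_atTop_atTop
    have := htop.comp hmap
    refine this.congr fun m => ?_
    simp only [Function.comp_apply, hc_def]
    congr 2
    push_cast; ring
  have hbpos : ∀ n k, 0 < b n k := fun n k =>
    Real.rpow_pos_of_pos (Finset.prod_pos fun i _ => hpos _) _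
  -- summability of `b n` for `n ≥ 1`
  have hsummable : ∀ n : ℕ, 1 ≤ n → Summable (fun k => b n k) := by
    intro n hn
    have hmaj : Summable (fun k : ℤ => ∑ i ∈ Finset.range n, ((1 : ℝ) / n) * a (k + (i : ℤ))) := by
      refine summable_sum fun i _ => ?_
      exact (hsum.comp_injective (add_left_injective (i : ℤ))).mul_left _
    refine Summable.of_nonneg_of_le (fun k => (hbpos n k).le) (fun k => ?_) hmaj
    have h1 : b n k = ∏ i ∈ Finset.range n, a (k + (i : ℤ)) ^ ((1 : ℝ) / n) :=
      (Real.finset_prod_rpow _ _ (fun i _ => (hpos _).le) _).symm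
    rw [h1]
    refine Real.geom_mean_le_arith_mean_weighted _ _ _ (fun i _ => by positivity) ?_
      (fun i _ => (hpos _).le)
    have hn' : (n : ℝ) ≠ 0 := Nat.cast_ne_zero.mpr (by omega)
    simp [Finset.sum_const, hn']
  -- ratio convergence
  have hratio : ∀ j : ℕ, Tendsto (fun n => b n (k₀ + (j : ℤ)) / b n k₀) atTop (nhds 1) := by
    intro j
    have := aux_ratio c hcpos hcrat j
    refine this.congr fun n => ?_
    congr 2
    · apply Finset.prod_congr rfl
      intro i _
      simp only [hc_def]
      congr 1
      push_cast; ring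
  -- the tsum divided by the numerator tends to infinity
  have hST : Tendsto (fun n : ℕ => (∑' k : ℤ, b n k) / b n k₀) atTop atTop := by
    rw [tendsto_atTop]
    intro C
    obtain ⟨J, hJ⟩ := exists_nat_ge C
    have hsumJ : Tendsto (fun n => ∑ j ∈ Finset.range (J + 1), b n (k₀ + (j : ℤ)) / b n k₀)
        atTop (nhds (J + 1)) := by
      have := tendsto_finset_sum (Finset.range (J + 1)) (fun j _ => hratio j)
      simpa using this
    have hCJ : C < ((J : ℝ) + 1) := lt_of_le_of_lt hJ (by linarith)
    filter_upwards [hsumJ.eventually_const_le hCJ, eventually_ge_atTop 1] with n hn1 hn2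
    have hsub : ∑ j ∈ Finset.range (J + 1), b n (k₀ + (j : ℤ)) ≤ ∑' k : ℤ, b n k := by
      have himg : ∑ j ∈ Finset.range (J + 1), b n (k₀ + (j : ℤ))
          = ∑ k ∈ (Finset.range (J + 1)).image (fun j : ℕ => k₀ + (j : ℤ)), b n k := by
        rw [Finset.sum_image]
        intro x _ y _ hxy
        simp only at hxy
        omega
      rw [himg]
      exact Summable.sum_le_tsum _ (fun k _ => (hbpos n k).le) (hsummable n hn2)
    calc C ≤ ∑ j ∈ Finset.range (J + 1), b n (k₀ + (j : ℤ)) / b n k₀ := hn1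
      _ = (∑ j ∈ Finset.range (J + 1), b n (k₀ + (j : ℤ))) / b n k₀ := (Finset.sum_div _ _ _).symm
      _ ≤ (∑' k : ℤ, b n k) / b n k₀ := by
          exact (div_le_div_iff_of_pos_right (hbpos n k₀)).mpr hsub
  have hfinal := hST.inv_tendsto_atTop
  refine hfinal.congr fun n => ?_
  simp only [Pi.inv_apply]
  rw [inv_div]
end

section
/- Let (a_k)_{k∈ℤ} be positive real numbers with a_{k+1}/a_k → 1 as k → ±∞ and C := inf_k (a_{k+1}/a_k) > 0. Setting c_n := inf_k (a_{k+n}/a_k), one has c_n^{1/n} → 1 as n → ∞. -/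
open Filter

private lemma tele_stmt3 (a : ℤ → ℝ) (hpos : ∀ k, 0 < a k) (k : ℤ) (n : ℕ) :
    a (k + n) / a k = ∏ i ∈ Finset.range n, a (k + i + 1) / a (k + i) := by
  induction n with
  | zero => simp [div_self (hpos k).ne']
  | succ n ih =>
    rw [Finset.prod_range_succ, ← ih]
    have h1 : (k + ((n:ℕ)+1:ℕ) : ℤ) = k + (n:ℤ) + 1 := by push_cast; ring
    rw [h1]
    field_simp [(hpos (k+(n:ℤ))).ne', (hpos k).ne']

/-- If `(a k)_{k ∈ ℤ}` is positive, `a (k+1) / a k → 1` as `k → ±∞`, and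
`C := ⨅ k, a (k+1) / a k > 0`, then `c n := ⨅ k, a (k+n) / a k` satisfies `c n ^ (1/n) → 1`. -/
theorem stmt_3 (a : ℤ → ℝ) (hpos : ∀ k, 0 < a k)
    (htop : Tendsto (fun k : ℤ => a (k + 1) / a k) atTop (nhds 1))
    (hbot : Tendsto (fun k : ℤ => a (k + 1) / a k) atBot (nhds 1))
    (hC : 0 < ⨅ k : ℤ, a (k + 1) / a k) :
    Tendsto (fun n : ℕ => (⨅ k : ℤ, a (k + (n : ℤ)) / a k) ^ ((1 : ℝ) / n))
      atTop (nhds 1) := by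
  have hratio_pos : ∀ k : ℤ, 0 < a (k + 1) / a k := fun k => div_pos (hpos _) (hpos _)
  have hbdd : BddBelow (Set.range fun k : ℤ => a (k + 1) / a k) :=
    ⟨0, by rintro x ⟨k, rfl⟩; exact (hratio_pos k).le⟩
  have hCle : ∀ k : ℤ, (⨅ k : ℤ, a (k + 1) / a k) ≤ a (k + 1) / a k := fun k => ciInf_le hbdd k
  have hcpos : ∀ (n : ℕ) (k : ℤ), 0 < a (k + (n:ℤ)) / a k := fun n k => div_pos (hpos _) (hpos _)
  have hbddn : ∀ n : ℕ, BddBelow (Set.range fun k : ℤ => a (k + (n:ℤ)) / a k) := fun n =>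
    ⟨0, by rintro x ⟨k, rfl⟩; exact (hcpos n k).le⟩
  have hcnonneg : ∀ n : ℕ, 0 ≤ ⨅ k : ℤ, a (k + (n:ℤ)) / a k := fun n =>
    le_ciInf fun k => (hcpos n k).le
  rw [tendsto_order]
  constructor
  · -- lower bound
    intro δ hδ
    set δ' := max δ (1/2) with hδ'def
    have hδ'0 : (0:ℝ) < δ' := lt_of_lt_of_le (by norm_num) (le_max_right _ _)
    have hδ'1 : δ' < 1 := max_lt hδ (by norm_num)
    set s := Real.sqrt δ' with hsdef
    have hs0 : 0 < s := Real.sqrt_pos.2 hδ'0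
    have hs1 : s < 1 := by
      rw [hsdef, show (1:ℝ) = Real.sqrt 1 by simp]
      exact Real.sqrt_lt_sqrt hδ'0.le hδ'1
    have hδ's : δ' < s := by
      rw [hsdef, Real.lt_sqrt hδ'0.le]
      nlinarith
    obtain ⟨N₁, hN₁⟩ := (htop.eventually_const_lt hs1).exists_forall_of_atTop
    obtain ⟨N₂, hN₂⟩ := (hbot.eventually_const_lt hs1).exists_forall_of_atBot
    set C' := min (⨅ k : ℤ, a (k + 1) / a k) 1 with hC'def
    have hC'0 : 0 < C' := lt_min hC one_pos
    have hC'1 : C' ≤ 1 := min_le_right _ _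
    set m := (Finset.Icc N₂ N₁).card with hmdef
    set K := C' ^ m with hKdef
    have hK0 : 0 < K := pow_pos hC'0 m
    have key : ∀ (n : ℕ) (k : ℤ), K * s ^ n ≤ a (k + (n:ℤ)) / a k := by
      intro n k
      rw [tele_stmt3 a hpos k n]
      have step : ∀ i ∈ Finset.range n,
          (if k + (i:ℤ) ∈ Finset.Icc N₂ N₁ then C' else 1) * s ≤ a (k + i + 1) / a (k + i) := by
        intro i _
        by_cases h : k + (i:ℤ) ∈ Finset.Icc N₂ N₁
        · simp only [h, if_true]
          calc C' * s ≤ C' * 1 := by nlinarith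
            _ = C' := mul_one _
            _ ≤ ⨅ k : ℤ, a (k + 1) / a k := min_le_left _ _
            _ ≤ _ := hCle _
        · simp only [h, if_false, one_mul]
          simp only [Finset.mem_Icc, not_and, not_le] at h
          rcases lt_or_ge (k + (i:ℤ)) N₂ with h2 | h2
          · exact (hN₂ _ h2.le).le
          · exact (hN₁ _ (h h2).le).le
      have hwnonneg : ∀ i ∈ Finset.range n,
          0 ≤ (if k + (i:ℤ) ∈ Finset.Icc N₂ N₁ then C' else 1) * s := by
        intro i _
        by_cases h : k + (i:ℤ) ∈ Finset.Icc N₂ N₁ <;> simp [h] <;> positivity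
      have hprod := Finset.prod_le_prod hwnonneg step
      refine le_trans ?_ hprod
      rw [Finset.prod_mul_distrib, Finset.prod_const, Finset.card_range]
      refine mul_le_mul_of_nonneg_right ?_ (by positivity)
      rw [Finset.prod_ite, Finset.prod_const, Finset.prod_const, one_pow, mul_one]
      refine pow_le_pow_of_le_one hC'0.le hC'1 ?_
      rw [hmdef]
      refine Finset.card_le_card_of_injOn (fun i : ℕ => k + (i:ℤ)) ?_ ?_
      · intro i hi
        simp only [Finset.mem_coe, Finset.mem_filter] at hi
        exact hi.2
      · intro i hi j hj hij
        dsimp only at hij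
        omega
    -- limit of K^(1/n) * s
    have h1 : Tendsto (fun n : ℕ => Real.log K * ((1:ℝ)/n)) atTop (nhds 0) := by
      simpa [div_eq_mul_inv] using tendsto_const_div_atTop_nhds_zero_nat (Real.log K)
    have h2 : Tendsto (fun n : ℕ => K ^ ((1:ℝ)/n)) atTop (nhds 1) := by
      have hc := (Real.continuous_exp.tendsto 0).comp h1
      rw [Real.exp_zero] at hc
      exact hc.congr fun n => (Real.rpow_def_of_pos hK0 _).symm
    have hlim : Tendsto (fun n : ℕ => K ^ ((1:ℝ)/n) * s) atTop (nhds s) := by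
      simpa using h2.mul_const s
    filter_upwards [hlim.eventually_const_lt hδ's, eventually_ge_atTop 1] with n h1n h2n
    have hn0 : n ≠ 0 := by omega
    calc δ ≤ δ' := le_max_left _ _
      _ < K ^ ((1:ℝ)/n) * s := h1n
      _ = (K * s ^ n) ^ ((1:ℝ)/n) := by
          rw [one_div, Real.mul_rpow hK0.le (pow_nonneg hs0.le n),
            Real.pow_rpow_inv_natCast hs0.le hn0]
      _ ≤ _ := Real.rpow_le_rpow (by positivity) (le_ciInf fun k => key n k) (by positivity)
  · -- upper bound
    intro δ hδ
    set δ'' := (1 + δ) / 2 with hδ''def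
    have hδ''1 : 1 < δ'' := by rw [hδ''def]; linarith
    have hδ''δ : δ'' < δ := by rw [hδ''def]; linarith
    obtain ⟨N, hN⟩ := (htop.eventually_lt_const hδ''1).exists_forall_of_atTop
    filter_upwards [eventually_ge_atTop 1] with n hn
    have hn0 : n ≠ 0 := by omega
    have hub : a (N + n) / a N ≤ δ'' ^ n := by
      rw [tele_stmt3 a hpos N n]
      calc ∏ i ∈ Finset.range n, a (N + i + 1) / a (N + i)
          ≤ ∏ _i ∈ Finset.range n, δ'' :=
            Finset.prod_le_prod (fun i _ => (div_pos (hpos _) (hpos _)).le)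
              (fun i _ => (hN _ (by omega)).le)
        _ = δ'' ^ n := by rw [Finset.prod_const, Finset.card_range]
    calc (⨅ k : ℤ, a (k + (n:ℤ)) / a k) ^ ((1:ℝ)/n)
        ≤ (δ'' ^ n) ^ ((1:ℝ)/n) :=
          Real.rpow_le_rpow (hcnonneg n) (le_trans (ciInf_le (hbddn n) N) hub) (by positivity)
      _ = δ'' := by rw [one_div, Real.pow_rpow_inv_natCast (by linarith) hn0]
      _ < δ := hδ''δ
end

section
/- Let f be an orientation-preserving C¹ diffeomorphism of [0,1] with f(x) > x on (0,1), let p ∈ (0,1), and let I = [p, f(p)]. Suppose V := var(log Df) < ∞. Then Σ_{n≥0} Df^n(p) ≤ e^V / |I| · Σ_{n≥0} |f^n(I)| < e^V / |I|, where Df^n denotes the derivative of the n-th iterate. In particular, for every ε > 0, the set of n with Df^n(p) ≤ ε/n has density 1 in ℕ, and consequently there exists an increasing sequence n_k with n_k · Df^{n_k}(p) → 0. -/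
open Filter Set

private lemma iter_hasDerivAt {f : ℝ → ℝ} (hd : Differentiable ℝ f) (n : ℕ) (x : ℝ) :
    HasDerivAt (f^[n]) (∏ i ∈ Finset.range n, deriv f (f^[i] x)) x := by
  induction n with
  | zero => simpa using hasDerivAt_id x
  | succ n ih =>
    have h := ((hd (f^[n] x)).hasDerivAt).comp x ih
    rw [Function.iterate_succ']
    convert h using 1
    · rfl
    · rfl
    rw [Finset.prod_range_succ, mul_comm]

private lemma exists_small (d : ℕ → ℝ) (hd0 : ∀ n, 0 ≤ d n) (hs : Summable d) {c : ℝ}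
    (hc : 0 < c) (m : ℕ) : ∃ n, m < n ∧ (n : ℝ) * d n ≤ c := by
  by_contra hcon
  push_neg at hcon
  have h1 : Summable (fun n : ℕ => c / ((n : ℝ) + (m + 1))) := by
    refine Summable.of_nonneg_of_le (fun n => by positivity)
      (fun n => ?_) ((summable_nat_add_iff (m + 1)).2 hs)
    have hlt := hcon (n + (m + 1)) (by omega)
    rw [div_le_iff₀ (by positivity)]
    push_cast at hlt ⊢
    nlinarith [hd0 (n + (m+1))]
  have h2 : Summable (fun n : ℕ => c / (n : ℝ)) := by
    rw [← summable_nat_add_iff (m + 1)]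
    convert h1 using 2 with n
    · rfl
    push_cast; ring
  have h3 : Summable (fun n : ℕ => (n : ℝ)⁻¹) := by
    have := h2.mul_left c⁻¹
    convert this using 2 with n
    · rfl
    field_simp
  exact Real.not_summable_natCast_inv h3

private lemma density_lemma (d : ℕ → ℝ) (hpos : ∀ n, 0 ≤ d n) (hs : Summable d)
    (ε : ℝ) (hε : 0 < ε) :
    Tendsto (fun N : ℕ => (Nat.card {n : ℕ | n < N ∧ d n ≤ ε / n} : ℝ) / N) atTop (nhds 1) := by
  classical
  set T := ∑' n, d n with hT
  set B : ℕ → Finset ℕ := fun N => (Finset.range N).filter (fun n => ¬ d n ≤ ε / n) with hBdef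
  have hcard : ∀ N : ℕ, (Nat.card {n : ℕ | n < N ∧ d n ≤ ε / n} : ℝ) = N - (B N).card := by
    intro N
    have hset : {n : ℕ | n < N ∧ d n ≤ ε / n}
        = ↑((Finset.range N).filter (fun n => d n ≤ ε / n)) := by
      ext n; simp [Finset.mem_filter, Finset.mem_range, and_comm]
    rw [hset, Nat.card_coe_set_eq, Set.ncard_coe_finset]
    have h := Finset.card_filter_add_card_filter_not
      (s := Finset.range N) (p := fun n => d n ≤ ε / n)
    rw [Finset.card_range] at h
    have : ((Finset.range N).filter (fun n => d n ≤ ε / n)).card + ((B N).card) = N := h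
    have h2 := congrArg (Nat.cast : ℕ → ℝ) this
    push_cast at h2
    linarith
  have hbad : Tendsto (fun N : ℕ => ((B N).card : ℝ) / N) atTop (nhds 0) := by
    rw [NormedAddCommGroup.tendsto_nhds_zero]
    intro δ hδ
    -- partial sums tend to T
    have htail : Tendsto (fun M : ℕ => T - ∑ n ∈ Finset.range M, d n) atTop (nhds 0) := by
      have h1 := hs.hasSum.tendsto_sum_nat
      have h2 : Tendsto (fun M : ℕ => T - ∑ n ∈ Finset.range M, d n) atTop (nhds (T - T)) :=
        tendsto_const_nhds.sub h1
      simpa using h2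
    obtain ⟨M, hM1, hMtail⟩ :
        ∃ M : ℕ, 1 ≤ M ∧ T - ∑ n ∈ Finset.range M, d n < ε * δ / 2 := by
      have hev := htail.eventually (eventually_lt_nhds (show (0:ℝ) < ε * δ / 2 by positivity))
      obtain ⟨M, hM⟩ := ((eventually_ge_atTop 1).and hev).exists
      exact ⟨M, hM.1, hM.2⟩
    -- key bound for N ≥ M
    have hkey : ∀ N : ℕ, M ≤ N → ((B N).card : ℝ) ≤ M + δ / 2 * N := by
      intro N hMN
      have hNpos : 0 < N := lt_of_lt_of_le hM1 hMN
      set C : Finset ℕ := (Finset.Ico M N).filter (fun n => ¬ d n ≤ ε / n) with hC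
      have hsub : B N ⊆ Finset.range M ∪ C := by
        intro n hn
        simp only [hBdef, Finset.mem_filter, Finset.mem_range] at hn
        rcases lt_or_ge n M with h | h
        · exact Finset.mem_union_left _ (Finset.mem_range.2 h)
        · exact Finset.mem_union_right _
            (Finset.mem_filter.2 ⟨Finset.mem_Ico.2 ⟨h, hn.1⟩, hn.2⟩)
      have hBle : (B N).card ≤ M + C.card := by
        calc (B N).card ≤ (Finset.range M ∪ C).card := Finset.card_le_card hsub
          _ ≤ (Finset.range M).card + C.card := Finset.card_union_le _ _
          _ = M + C.card := by rw [Finset.card_range]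
      -- each n in C has d n ≥ ε / N
      have hCbound : (C.card : ℝ) * (ε / N) ≤ T - ∑ n ∈ Finset.range M, d n := by
        have h1 : ∀ n ∈ C, ε / N ≤ d n := by
          intro n hn
          simp only [hC, Finset.mem_filter, Finset.mem_Ico] at hn
          have hn1 : (1:ℝ) ≤ n := by exact_mod_cast le_trans hM1 hn.1.1
          have hnN : (n:ℝ) ≤ N := by exact_mod_cast le_of_lt hn.1.2
          have : ε / N ≤ ε / n := by
            apply div_le_div_of_nonneg_left hε.le (by linarith) hnN
          exact le_trans this (le_of_lt (not_le.1 hn.2))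
        have h2 : (C.card : ℝ) * (ε / N) ≤ ∑ n ∈ C, d n := by
          have := Finset.card_nsmul_le_sum C d (ε / N) (fun n hn => h1 n hn)
          simpa [nsmul_eq_mul] using this
        have h3 : ∑ n ∈ C, d n ≤ ∑ n ∈ Finset.Ico M N, d n :=
          Finset.sum_le_sum_of_subset_of_nonneg (Finset.filter_subset _ _)
            (fun n _ _ => hpos n)
        have h4 : ∑ n ∈ Finset.Ico M N, d n = ∑ n ∈ Finset.range N, d n
            - ∑ n ∈ Finset.range M, d n := by
          rw [Finset.sum_Ico_eq_sub _ hMN]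
        have h5 : ∑ n ∈ Finset.range N, d n ≤ T :=
          hs.sum_le_tsum (Finset.range N) (fun i _ => hpos i)
        linarith
      have hCcard : (C.card : ℝ) ≤ δ / 2 * N := by
        have hNR : (0:ℝ) < N := by exact_mod_cast hNpos
        have h0 := lt_of_le_of_lt hCbound hMtail
        have h6 : (C.card : ℝ) * ε < ε * δ / 2 * N := by
          have h7 := mul_lt_mul_of_pos_right h0 hNR
          calc (C.card : ℝ) * ε = (C.card : ℝ) * (ε / N) * N := by field_simp
            _ < (ε * δ / 2) * N := h7
        nlinarith
      have : ((B N).card : ℝ) ≤ (M : ℝ) + C.card := by exact_mod_cast hBle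
      linarith
    -- now conclude eventually
    have hMd : Tendsto (fun N : ℕ => (M : ℝ) / N) atTop (nhds 0) :=
      tendsto_const_div_atTop_nhds_zero_nat (M : ℝ)
    have hev2 := hMd.eventually (eventually_lt_nhds (show (0:ℝ) < δ / 2 by positivity))
    filter_upwards [hev2, eventually_ge_atTop M, eventually_ge_atTop 1] with N h1 h2 h3
    have hNR : (0:ℝ) < N := by exact_mod_cast lt_of_lt_of_le Nat.zero_lt_one h3
    have hB0 : (0:ℝ) ≤ ((B N).card : ℝ) / N := by positivity
    rw [Real.norm_eq_abs, abs_of_nonneg hB0]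
    have := hkey N h2
    rw [div_lt_iff₀ hNR]
    calc ((B N).card : ℝ) ≤ M + δ / 2 * N := this
      _ < δ / 2 * N + δ / 2 * N := by
          have : (M:ℝ) < δ / 2 * N := by rwa [div_lt_iff₀ hNR] at h1
          linarith
      _ = δ * N := by ring
  -- combine
  have : Tendsto (fun N : ℕ => 1 - ((B N).card : ℝ) / N) atTop (nhds 1) := by
    have := tendsto_const_nhds (x := (1:ℝ)) (f := atTop (α := ℕ)) |>.sub hbad
    simpa using this
  apply this.congr'
  filter_upwards [eventually_ge_atTop 1] with N hN
  have hNR : (0:ℝ) < N := by exact_mod_cast hN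
  rw [hcard N, sub_div]
  rw [div_self hNR.ne']



/-- Summability estimate for derivatives of iterates of an interval diffeomorphism with
`f x > x` on `(0,1)` and `log Df` of bounded variation `V`, with the ensuing density-one
and subsequence conclusions. -/
theorem stmt_4 (f : ℝ → ℝ) (hd : Differentiable ℝ f)
    (hpos : ∀ x ∈ Icc (0 : ℝ) 1, 0 < deriv f x)
    (h0 : f 0 = 0) (h1 : f 1 = 1)
    (hmaps : MapsTo f (Icc (0 : ℝ) 1) (Icc (0 : ℝ) 1))
    (hmove : ∀ x ∈ Ioo (0 : ℝ) 1, x < f x)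
    (hbv : BoundedVariationOn (fun x => Real.log (deriv f x)) (Icc (0 : ℝ) 1))
    (p : ℝ) (hp : p ∈ Ioo (0 : ℝ) 1)
    (V : ℝ)
    (hV : V = (eVariationOn (fun x => Real.log (deriv f x)) (Icc (0 : ℝ) 1)).toReal) :
    (∑' n : ℕ, deriv (f^[n]) p)
        ≤ Real.exp V / (f p - p) * ∑' n : ℕ, (f^[n + 1] p - f^[n] p)
      ∧ (∑' n : ℕ, (f^[n + 1] p - f^[n] p)) < 1
      ∧ (∀ ε > (0 : ℝ),
          Tendsto (fun N : ℕ =>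
              (Nat.card {n : ℕ | n < N ∧ deriv (f^[n]) p ≤ ε / n} : ℝ) / N)
            atTop (nhds 1))
      ∧ ∃ s : ℕ → ℕ, StrictMono s ∧
          Tendsto (fun k : ℕ => (s k : ℝ) * deriv (f^[s k]) p) atTop (nhds 0) := by
  -- strict monotonicity of f on [0,1]
  have hmono : StrictMonoOn f (Icc (0:ℝ) 1) := by
    apply strictMonoOn_of_deriv_pos (convex_Icc 0 1) hd.continuous.continuousOn
    intro x hx
    rw [interior_Icc] at hx
    exact hpos x (Ioo_subset_Icc_self hx)
  -- f maps Ioo into Ioo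
  have hIoo : ∀ x ∈ Ioo (0:ℝ) 1, f x ∈ Ioo (0:ℝ) 1 := by
    intro x hx
    refine ⟨lt_trans hx.1 (hmove x hx), ?_⟩
    have := hmono (Ioo_subset_Icc_self hx) (right_mem_Icc.2 zero_le_one) hx.2
    rwa [h1] at this
  -- orbits stay in Ioo
  have horb : ∀ x ∈ Ioo (0:ℝ) 1, ∀ n : ℕ, f^[n] x ∈ Ioo (0:ℝ) 1 := by
    intro x hx n
    induction n with
    | zero => simpa using hx
    | succ n ih => rw [Function.iterate_succ_apply']; exact hIoo _ ih
  -- strict monotonicity of iterates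
  have hmapsI : ∀ n : ℕ, MapsTo (f^[n]) (Icc (0:ℝ) 1) (Icc (0:ℝ) 1) :=
    fun n => hmaps.iterate n
  have hmonoI : ∀ n : ℕ, StrictMonoOn (f^[n]) (Icc (0:ℝ) 1) := by
    intro n
    induction n with
    | zero => intro x _ y _ h; simpa using h
    | succ n ih =>
      rw [Function.iterate_succ']
      exact hmono.comp ih (hmapsI n)
  set a : ℕ → ℝ := fun n => f^[n + 1] p - f^[n] p with ha
  set dP : ℕ → ℝ := fun n => deriv (f^[n]) p with hdP
  have hfp : p < f p := hmove p hp
  have hfpI : f p ∈ Ioo (0:ℝ) 1 := hIoo p hp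
  have hapos : ∀ n, 0 < a n := by
    intro n
    have h := hmove _ (horb p hp n)
    simp only [ha, Function.iterate_succ_apply']
    linarith
  -- partial sums of a
  have hsum_a : ∀ N : ℕ, ∑ n ∈ Finset.range N, a n = f^[N] p - p := by
    intro N
    have := Finset.sum_range_sub (fun n => f^[n] p) N
    simpa [ha] using this
  have hsummable_a : Summable a := by
    apply summable_of_sum_range_le (c := 1 - p) (fun n => (hapos n).le)
    intro N
    rw [hsum_a]
    have := (horb p hp N).2
    linarith
  have htsum_a : (∑' n : ℕ, a n) < 1 := by
    have hle : (∑' n : ℕ, a n) ≤ 1 - p := by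
      apply hsummable_a.tsum_le_of_sum_range_le
      intro N
      rw [hsum_a]
      have := (horb p hp N).2
      linarith
    linarith [hp.1]
  -- positivity of dP
  have hdPpos : ∀ n, 0 < dP n := by
    intro n
    rw [hdP]
    simp only
    rw [(iter_hasDerivAt hd n p).deriv]
    exact Finset.prod_pos fun i _ => hpos _ (Ioo_subset_Icc_self (horb p hp i))
  -- KEY ESTIMATE
  have hkey : ∀ n : ℕ, dP n ≤ Real.exp V / (f p - p) * a n := by
    intro n
    obtain ⟨q, hq, hslope⟩ := exists_hasDerivAt_eq_slope (f^[n])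
      (fun x => ∏ i ∈ Finset.range n, deriv f (f^[i] x)) hfp
      ((hd.continuous.iterate n).continuousOn)
      (fun x _ => iter_hasDerivAt hd n x)
    have hqI : q ∈ Ioo (0:ℝ) 1 := ⟨lt_trans hp.1 hq.1, lt_trans hq.2 hfpI.2⟩
    have hinter1 : ∀ i : ℕ, f^[i] p < f^[i] q := fun i =>
      hmonoI i (Ioo_subset_Icc_self hp) (Ioo_subset_Icc_self hqI) hq.1
    have hinter2 : ∀ i : ℕ, f^[i] q < f^[i+1] p := by
      intro i
      have := hmonoI i (Ioo_subset_Icc_self hqI) (Ioo_subset_Icc_self hfpI) hq.2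
      rwa [← Function.iterate_succ_apply] at this
    set g : ℝ → ℝ := fun x => Real.log (deriv f x) with hg
    set u : ℕ → ℝ := fun m => if Even m then f^[m/2] p else f^[m/2] q with hu
    have hu_even : ∀ i : ℕ, u (2*i) = f^[i] p := by
      intro i
      simp only [hu]
      rw [if_pos (even_two_mul i)]
      have h2 : 2*i/2 = i := by omega
      rw [h2]
    have hu_odd : ∀ i : ℕ, u (2*i+1) = f^[i] q := by
      intro i
      simp only [hu]
      have hne : ¬ Even (2*i+1) := by rw [Nat.even_iff]; omega
      rw [if_neg hne]
      have h2 : (2*i+1)/2 = i := by omega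
      rw [h2]
    have hu_mono : Monotone u := by
      apply monotone_nat_of_le_succ
      intro m
      rcases Nat.even_or_odd m with ⟨k, hk⟩ | ⟨k, hk⟩
      · have hq1 : m = 2*k := by omega
        subst hq1
        rw [hu_even, hu_odd]
        exact (hinter1 k).le
      · have hq1 : m = 2*k+1 := by omega
        subst hq1
        have h22 : 2*k+1+1 = 2*(k+1) := by ring
        rw [h22, hu_odd, hu_even]
        exact (hinter2 k).le
    have hu_mem : ∀ i : ℕ, u i ∈ Icc (0:ℝ) 1 := by
      intro i
      simp only [hu]
      split
      · exact Ioo_subset_Icc_self (horb p hp _)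
      · exact Ioo_subset_Icc_self (horb q hqI _)
    have hvar := eVariationOn.sum_le (f := g) (s := Icc (0:ℝ) 1) (n := 2*n) hu_mono hu_mem
    have hsum_even : ∑ i ∈ Finset.range n, edist (g (f^[i] q)) (g (f^[i] p))
        ≤ ∑ m ∈ Finset.range (2*n), edist (g (u (m+1))) (g (u m)) := by
      have himg : ((Finset.range n).image (fun i => 2*i)) ⊆ Finset.range (2*n) := by
        intro m hm
        simp only [Finset.mem_image, Finset.mem_range] at hm ⊢
        omega
      calc ∑ i ∈ Finset.range n, edist (g (f^[i] q)) (g (f^[i] p))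
          = ∑ i ∈ Finset.range n, edist (g (u (2*i+1))) (g (u (2*i))) := by
            refine Finset.sum_congr rfl fun i _ => ?_
            rw [hu_even, hu_odd]
        _ = ∑ m ∈ (Finset.range n).image (fun i => 2*i),
              edist (g (u (m+1))) (g (u m)) :=
            by rw [Finset.sum_image]; intro x _ y _ h; simp only at h; omega
        _ ≤ ∑ m ∈ Finset.range (2*n), edist (g (u (m+1))) (g (u m)) :=
            Finset.sum_le_sum_of_subset himg
    have hreal : ∑ i ∈ Finset.range n, |g (f^[i] q) - g (f^[i] p)| ≤ V := by
      have hle : ENNReal.ofReal (∑ i ∈ Finset.range n, |g (f^[i] q) - g (f^[i] p)|)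
          ≤ eVariationOn g (Icc (0:ℝ) 1) := by
        rw [ENNReal.ofReal_sum_of_nonneg (fun i _ => abs_nonneg _)]
        refine le_trans (le_of_eq ?_) (le_trans hsum_even hvar)
        refine Finset.sum_congr rfl fun i _ => ?_
        rw [edist_dist, Real.dist_eq]
      rw [hV]
      exact (ENNReal.ofReal_le_iff_le_toReal hbv).1 hle
    -- products
    set P : ℝ := ∏ i ∈ Finset.range n, deriv f (f^[i] p) with hP
    set Q : ℝ := ∏ i ∈ Finset.range n, deriv f (f^[i] q) with hQ
    have hPpos : 0 < P :=
      Finset.prod_pos fun i _ => hpos _ (Ioo_subset_Icc_self (horb p hp i))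
    have hQpos : 0 < Q :=
      Finset.prod_pos fun i _ => hpos _ (Ioo_subset_Icc_self (horb q hqI i))
    have hlogP : Real.log P = ∑ i ∈ Finset.range n, g (f^[i] p) :=
      Real.log_prod fun i _ => (hpos _ (Ioo_subset_Icc_self (horb p hp i))).ne'
    have hlogQ : Real.log Q = ∑ i ∈ Finset.range n, g (f^[i] q) :=
      Real.log_prod fun i _ => (hpos _ (Ioo_subset_Icc_self (horb q hqI i))).ne'
    have hlog_le : Real.log P ≤ V + Real.log Q := by
      rw [hlogP, hlogQ]
      have h1 : ∑ i ∈ Finset.range n, g (f^[i] p) - ∑ i ∈ Finset.range n, g (f^[i] q)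
          ≤ V := by
        rw [← Finset.sum_sub_distrib]
        refine le_trans (Finset.sum_le_sum fun i _ => ?_) hreal
        rw [abs_sub_comm]
        exact le_abs_self _
      linarith
    have hPQ : P ≤ Real.exp V * Q := by
      calc P = Real.exp (Real.log P) := (Real.exp_log hPpos).symm
        _ ≤ Real.exp (V + Real.log Q) := Real.exp_le_exp.2 hlog_le
        _ = Real.exp V * Q := by rw [Real.exp_add, Real.exp_log hQpos]
    have hQval : Q = a n / (f p - p) := by
      rw [hslope]
      simp only [ha]
      rw [Function.iterate_succ_apply]
    have hdPn : dP n = P := by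
      rw [hdP]
      simp only
      rw [(iter_hasDerivAt hd n p).deriv]
    rw [hdPn]
    calc P ≤ Real.exp V * Q := hPQ
      _ = Real.exp V / (f p - p) * a n := by rw [hQval]; ring
  -- summability of dP
  set C : ℝ := Real.exp V / (f p - p) with hC
  have hsummable_d : Summable dP :=
    Summable.of_nonneg_of_le (fun n => (hdPpos n).le) hkey (hsummable_a.mul_left C)
  refine ⟨?_, htsum_a, ?_, ?_⟩
  · calc (∑' n : ℕ, dP n) ≤ ∑' n : ℕ, C * a n :=
        hsummable_d.tsum_le_tsum hkey (hsummable_a.mul_left C)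
      _ = C * ∑' n : ℕ, a n := tsum_mul_left
  · intro ε hε
    exact density_lemma dP (fun n => (hdPpos n).le) hsummable_d ε hε
  · have hex : ∀ k m : ℕ, ∃ n', m < n' ∧ (n' : ℝ) * dP n' ≤ 1/((k:ℝ)+1) :=
      fun k m => exists_small dP (fun n => (hdPpos n).le) hsummable_d (by positivity) m
    choose F hF1 hF2 using hex
    set s : ℕ → ℕ := fun k => Nat.rec (F 0 0) (fun k ih => F (k+1) ih) k with hs
    have hss : ∀ k, s (k+1) = F (k+1) (s k) := fun k => rfl
    have hmono_s : StrictMono s :=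
      strictMono_nat_of_lt_succ fun k => by rw [hss]; exact hF1 _ _
    have hb : ∀ k, (s k : ℝ) * dP (s k) ≤ 1/((k:ℝ)+1) := by
      intro k
      cases k with
      | zero => have h00 : s 0 = F 0 0 := rfl; rw [h00]; simpa using hF2 0 0
      | succ k =>
        rw [hss]
        have := hF2 (k+1) (s k)
        push_cast at this ⊢
        linarith
    refine ⟨s, hmono_s, ?_⟩
    apply squeeze_zero (fun k => mul_nonneg (Nat.cast_nonneg _) (hdPpos _).le) hb
    exact tendsto_one_div_add_atTop_nhds_zero_nat
end

section
/- For a C¹⁺ᵇᵛ diffeomorphism f of [0,1], one has dist_∞(f) = inf over orientation-preserving C¹⁺ᵇᵛ diffeomorphisms h of var(log D(h∘f∘h⁻¹)). -/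
open Filter Set
open scoped ENNReal

/-- Total variation of `log` of the derivative on `[0,1]`. -/
noncomputable def varLogD (f : ℝ → ℝ) : ℝ :=
  (eVariationOn (fun x => Real.log (deriv f x)) (Icc (0 : ℝ) 1)).toReal

/-- `h` is an orientation-preserving C¹⁺ᵇᵛ diffeomorphism of `[0,1]`, with inverse `hinv`. -/
def IsBVDiffeo (h hinv : ℝ → ℝ) : Prop :=
  Differentiable ℝ h ∧ Differentiable ℝ hinv ∧
    h 0 = 0 ∧ h 1 = 1 ∧
    MapsTo h (Icc (0 : ℝ) 1) (Icc (0 : ℝ) 1) ∧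
    MapsTo hinv (Icc (0 : ℝ) 1) (Icc (0 : ℝ) 1) ∧
    (∀ x ∈ Icc (0 : ℝ) 1, hinv (h x) = x) ∧
    (∀ x ∈ Icc (0 : ℝ) 1, h (hinv x) = x) ∧
    (∀ x ∈ Icc (0 : ℝ) 1, 0 < deriv h x) ∧
    BoundedVariationOn (fun x => Real.log (deriv h x)) (Icc (0 : ℝ) 1)

lemma deriv_eqOn_Icc {F G : ℝ → ℝ} {x : ℝ} (hF : DifferentiableAt ℝ F x)
    (hG : DifferentiableAt ℝ G x) (hFG : EqOn F G (Icc (0:ℝ) 1)) (hx : x ∈ Icc (0:ℝ) 1) :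
    deriv F x = deriv G x := by
  have hu := (uniqueDiffOn_Icc (zero_lt_one)) x hx
  rw [← hF.derivWithin hu, ← hG.derivWithin hu]
  exact derivWithin_congr hFG (hFG hx)

variable {h hinv : ℝ → ℝ}

namespace IsBVDiffeo

lemma diff (hd : IsBVDiffeo h hinv) : Differentiable ℝ h := hd.1
lemma diff_inv (hd : IsBVDiffeo h hinv) : Differentiable ℝ hinv := hd.2.1
lemma map0 (hd : IsBVDiffeo h hinv) : h 0 = 0 := hd.2.2.1
lemma map1 (hd : IsBVDiffeo h hinv) : h 1 = 1 := hd.2.2.2.1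
lemma mapsTo (hd : IsBVDiffeo h hinv) : MapsTo h (Icc (0:ℝ) 1) (Icc (0:ℝ) 1) := hd.2.2.2.2.1
lemma mapsTo_inv (hd : IsBVDiffeo h hinv) : MapsTo hinv (Icc (0:ℝ) 1) (Icc (0:ℝ) 1) :=
  hd.2.2.2.2.2.1
lemma left_inv (hd : IsBVDiffeo h hinv) : ∀ x ∈ Icc (0:ℝ) 1, hinv (h x) = x :=
  hd.2.2.2.2.2.2.1
lemma right_inv (hd : IsBVDiffeo h hinv) : ∀ x ∈ Icc (0:ℝ) 1, h (hinv x) = x :=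
  hd.2.2.2.2.2.2.2.1
lemma deriv_pos (hd : IsBVDiffeo h hinv) : ∀ x ∈ Icc (0:ℝ) 1, 0 < deriv h x :=
  hd.2.2.2.2.2.2.2.2.1
lemma bv (hd : IsBVDiffeo h hinv) :
    BoundedVariationOn (fun x => Real.log (deriv h x)) (Icc (0:ℝ) 1) :=
  hd.2.2.2.2.2.2.2.2.2

lemma strictMonoOn (hd : IsBVDiffeo h hinv) : StrictMonoOn h (Icc (0:ℝ) 1) := by
  apply strictMonoOn_of_deriv_pos (convex_Icc _ _) hd.diff.continuous.continuousOn
  intro x hx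
  exact hd.deriv_pos x (interior_subset hx)

lemma monotoneOn_inv (hd : IsBVDiffeo h hinv) : MonotoneOn hinv (Icc (0:ℝ) 1) := by
  intro a ha b hb hab
  by_contra hlt
  push_neg at hlt
  have := hd.strictMonoOn (hd.mapsTo_inv hb) (hd.mapsTo_inv ha) hlt
  rw [hd.right_inv a ha, hd.right_inv b hb] at this
  exact absurd hab (not_le.mpr this)

lemma deriv_comp_inv (hd : IsBVDiffeo h hinv) {x : ℝ} (hx : x ∈ Icc (0:ℝ) 1) :
    deriv h (hinv x) * deriv hinv x = 1 := by
  have e1 : deriv (h ∘ hinv) x = deriv h (hinv x) * deriv hinv x :=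
    deriv_comp x (hd.diff _) (hd.diff_inv _)
  rw [← e1]
  have : deriv (h ∘ hinv) x = deriv (id : ℝ → ℝ) x := by
    apply deriv_eqOn_Icc (hd.diff.comp hd.diff_inv).differentiableAt
      differentiable_id.differentiableAt _ hx
    intro y hy
    exact hd.right_inv y hy
  rw [this, deriv_id]

lemma deriv_inv_pos (hd : IsBVDiffeo h hinv) {x : ℝ} (hx : x ∈ Icc (0:ℝ) 1) :
    0 < deriv hinv x := by
  have h1 := hd.deriv_comp_inv hx
  have h2 := hd.deriv_pos _ (hd.mapsTo_inv hx)
  nlinarith [h2]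

lemma deriv_inv_eq (hd : IsBVDiffeo h hinv) {x : ℝ} (hx : x ∈ Icc (0:ℝ) 1) :
    deriv hinv x = (deriv h (hinv x))⁻¹ := by
  have h1 := hd.deriv_comp_inv hx
  have h2 := (hd.deriv_pos _ (hd.mapsTo_inv hx)).ne'
  field_simp
  linear_combination h1

end IsBVDiffeo



section VarLemmas
variable {F G : ℝ → ℝ} {s : Set ℝ}

lemma evar_add_le :
    eVariationOn (fun x => F x + G x) s ≤ eVariationOn F s + eVariationOn G s := by
  rw [eVariationOn]
  refine iSup_le ?_
  rintro ⟨n, u, hu, us⟩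
  calc ∑ i ∈ Finset.range n, edist (F (u (i+1)) + G (u (i+1))) (F (u i) + G (u i))
      ≤ ∑ i ∈ Finset.range n,
        (edist (F (u (i+1))) (F (u i)) + edist (G (u (i+1))) (G (u i))) :=
        Finset.sum_le_sum fun i _ => edist_add_add_le _ _ _ _
    _ = (∑ i ∈ Finset.range n, edist (F (u (i+1))) (F (u i)))
        + ∑ i ∈ Finset.range n, edist (G (u (i+1))) (G (u i)) := Finset.sum_add_distrib
    _ ≤ _ := add_le_add (eVariationOn.sum_le (f := F) hu us) (eVariationOn.sum_le (f := G) hu us)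

lemma evar_neg : eVariationOn (fun x => -F x) s = eVariationOn F s := by
  simp only [eVariationOn, edist_neg_neg]

lemma evar_smul_le (c : ℝ) (hc : 0 ≤ c) :
    eVariationOn (fun x => c * F x) s ≤ ENNReal.ofReal c * eVariationOn F s := by
  rw [eVariationOn]
  refine iSup_le ?_
  rintro ⟨n, u, hu, us⟩
  have key : ∀ a b : ℝ, edist (c * a) (c * b) = ENNReal.ofReal c * edist a b := by
    intro a b
    rw [edist_dist, edist_dist, Real.dist_eq, Real.dist_eq, ← mul_sub, abs_mul,
      abs_of_nonneg hc, ENNReal.ofReal_mul hc]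
  calc ∑ i ∈ Finset.range n, edist (c * F (u (i+1))) (c * F (u i))
      = ENNReal.ofReal c * ∑ i ∈ Finset.range n, edist (F (u (i+1))) (F (u i)) := by
        simp only [key, Finset.mul_sum]
    _ ≤ _ := mul_le_mul_right (eVariationOn.sum_le (f := F) hu us) _

lemma evar_sub_const_le (c : ℝ) :
    eVariationOn (fun x => F x - c) s ≤ eVariationOn F s := by
  rw [eVariationOn]
  refine iSup_le ?_
  rintro ⟨n, u, hu, us⟩
  simp only [edist_sub_right]
  exact eVariationOn.sum_le (f := F) hu us

end VarLemmas


variable {f finv h hinv : ℝ → ℝ}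

section Iter

lemma diff_iterate (hf : Differentiable ℝ f) (n : ℕ) : Differentiable ℝ (f^[n]) := by
  induction n with
  | zero => simpa using differentiable_id
  | succ n ih => rw [Function.iterate_succ']; exact hf.comp ih

lemma deriv_iterate (hf : Differentiable ℝ f) (n : ℕ) (x : ℝ) :
    deriv (f^[n]) x = ∏ i ∈ Finset.range n, deriv f (f^[i] x) := by
  induction n with
  | zero => simp
  | succ n ih =>
    rw [Function.iterate_succ', Finset.prod_range_succ, ← ih,
      deriv_comp x (hf _) ((diff_iterate hf n) x), mul_comm]

lemma iterate_mem (hmap : MapsTo f (Icc (0:ℝ) 1) (Icc (0:ℝ) 1)) (n : ℕ) {x : ℝ}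
    (hx : x ∈ Icc (0:ℝ) 1) : f^[n] x ∈ Icc (0:ℝ) 1 := hmap.iterate n hx

lemma deriv_iterate_pos (hf : Differentiable ℝ f)
    (hmap : MapsTo f (Icc (0:ℝ) 1) (Icc (0:ℝ) 1))
    (hpos : ∀ x ∈ Icc (0:ℝ) 1, 0 < deriv f x) (n : ℕ) {x : ℝ} (hx : x ∈ Icc (0:ℝ) 1) :
    0 < deriv (f^[n]) x := by
  rw [deriv_iterate hf n x]
  exact Finset.prod_pos fun i _ => hpos _ (iterate_mem hmap i hx)

lemma log_deriv_iterate (hf : Differentiable ℝ f)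
    (hmap : MapsTo f (Icc (0:ℝ) 1) (Icc (0:ℝ) 1))
    (hpos : ∀ x ∈ Icc (0:ℝ) 1, 0 < deriv f x) (n : ℕ) {x : ℝ} (hx : x ∈ Icc (0:ℝ) 1) :
    Real.log (deriv (f^[n]) x) = ∑ i ∈ Finset.range n, Real.log (deriv f (f^[i] x)) := by
  rw [deriv_iterate hf n x]
  exact Real.log_prod fun i _ => (hpos _ (iterate_mem hmap i hx)).ne'

lemma monotoneOn_iterate (hmono : MonotoneOn f (Icc (0:ℝ) 1))
    (hmap : MapsTo f (Icc (0:ℝ) 1) (Icc (0:ℝ) 1)) (n : ℕ) :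
    MonotoneOn (f^[n]) (Icc (0:ℝ) 1) := by
  induction n with
  | zero => simpa using monotoneOn_id
  | succ n ih =>
    rw [Function.iterate_succ']
    intro a ha b hb hab
    exact hmono (hmap.iterate n ha) (hmap.iterate n hb) (ih ha hb hab)

end Iter

section SumVar

lemma evar_sum_le {ι : Type*} (t : Finset ι) (F : ι → ℝ → ℝ) (s : Set ℝ) :
    eVariationOn (fun x => ∑ i ∈ t, F i x) s ≤ ∑ i ∈ t, eVariationOn (F i) s := by
  classical
  induction t using Finset.induction with
  | empty =>
    simp only [Finset.sum_empty]
    exact le_of_eq (eVariationOn.constant_on (by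
      rintro x ⟨_, _, rfl⟩ y ⟨_, _, rfl⟩; rfl))
  | insert a t' hnotmem ih =>
    simp only [Finset.sum_insert hnotmem]
    calc eVariationOn (fun x => F a x + ∑ i ∈ t', F i x) s
        ≤ eVariationOn (F a) s + eVariationOn (fun x => ∑ i ∈ t', F i x) s := evar_add_le
      _ ≤ _ := add_le_add_right ih _

end SumVar
section Conj
variable {f finv h hinv : ℝ → ℝ}

lemma log_deriv_conj (hh : IsBVDiffeo h hinv) (hf : IsBVDiffeo f finv) {y : ℝ}
    (hy : y ∈ Icc (0:ℝ) 1) :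
    Real.log (deriv (h ∘ f ∘ hinv) y)
      = Real.log (deriv h (f (hinv y))) + Real.log (deriv f (hinv y))
        - Real.log (deriv h (hinv y)) := by
  have hx : hinv y ∈ Icc (0:ℝ) 1 := hh.mapsTo_inv hy
  have hfx : f (hinv y) ∈ Icc (0:ℝ) 1 := hf.mapsTo hx
  have e1 : deriv (h ∘ f ∘ hinv) y = deriv h ((f ∘ hinv) y) * deriv (f ∘ hinv) y :=
    deriv_comp y (hh.diff _) ((hf.diff.comp hh.diff_inv).differentiableAt)
  have e2 : deriv (f ∘ hinv) y = deriv f (hinv y) * deriv hinv y :=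
    deriv_comp y (hf.diff _) (hh.diff_inv _)
  have e3 : deriv hinv y = (deriv h (hinv y))⁻¹ := hh.deriv_inv_eq hy
  have p1 : 0 < deriv h (f (hinv y)) := hh.deriv_pos _ hfx
  have p2 : 0 < deriv f (hinv y) := hf.deriv_pos _ hx
  have p3 : 0 < deriv h (hinv y) := hh.deriv_pos _ hx
  rw [e1]
  simp only [Function.comp_apply]
  rw [e2, e3, Real.log_mul p1.ne' (by positivity), Real.log_mul p2.ne' (by positivity),
    Real.log_inv]
  ring

lemma log_deriv_eq_conj (hf : IsBVDiffeo f finv) (hh : IsBVDiffeo h hinv) {x : ℝ}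
    (hx : x ∈ Icc (0:ℝ) 1) :
    Real.log (deriv f x) = Real.log (deriv (h ∘ f ∘ hinv) (h x))
      + Real.log (deriv h x) - Real.log (deriv h (f x)) := by
  have hkey := log_deriv_conj hh hf (hh.mapsTo hx)
  rw [hh.left_inv x hx] at hkey
  rw [hkey]; ring

lemma varA (hf : IsBVDiffeo f finv) (hh : IsBVDiffeo h hinv) (n : ℕ) :
    eVariationOn (fun x => Real.log (deriv (f^[n]) x)) (Icc (0:ℝ) 1)
      ≤ (n : ℝ≥0∞) * eVariationOn (fun x => Real.log (deriv (h ∘ f ∘ hinv) x)) (Icc (0:ℝ) 1)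
        + 2 * eVariationOn (fun x => Real.log (deriv h x)) (Icc (0:ℝ) 1) := by
  set LDg := fun x => Real.log (deriv (h ∘ f ∘ hinv) x) with hLDg
  set LDh := fun x => Real.log (deriv h x) with hLDh
  have hEq : EqOn (fun x => Real.log (deriv (f^[n]) x))
      (fun x => (∑ i ∈ Finset.range n, LDg (h (f^[i] x))) + (LDh x + -(LDh (f^[n] x))))
      (Icc (0:ℝ) 1) := by
    intro x hx
    show Real.log (deriv (f^[n]) x) = _
    rw [log_deriv_iterate hf.diff hf.mapsTo hf.deriv_pos n hx]
    have h2 : ∀ i ∈ Finset.range n, Real.log (deriv f (f^[i] x))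
        = LDg (h (f^[i] x)) + (LDh (f^[i] x) - LDh (f^[i+1] x)) := by
      intro i _
      have hxi := iterate_mem hf.mapsTo i hx
      have hk := log_deriv_eq_conj hf hh hxi
      rw [Function.iterate_succ_apply' f i x, hLDg, hLDh]
      simp only []
      rw [hk]; ring
    rw [Finset.sum_congr rfl h2, Finset.sum_add_distrib,
      Finset.sum_range_sub' (fun i => LDh (f^[i] x)) n]
    simp only [Function.iterate_zero_apply]
    ring
  rw [eVariationOn.eq_of_eqOn hEq]
  have hmono : ∀ i : ℕ, MonotoneOn (fun x => h (f^[i] x)) (Icc (0:ℝ) 1) := by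
    intro i a ha b hb hab
    exact hh.strictMonoOn.monotoneOn (iterate_mem hf.mapsTo i ha)
      (iterate_mem hf.mapsTo i hb)
      (monotoneOn_iterate hf.strictMonoOn.monotoneOn hf.mapsTo i ha hb hab)
  have hmaps : ∀ i : ℕ, MapsTo (fun x => h (f^[i] x)) (Icc (0:ℝ) 1) (Icc (0:ℝ) 1) :=
    fun i x hx => hh.mapsTo (iterate_mem hf.mapsTo i hx)
  calc eVariationOn
        (fun x => (∑ i ∈ Finset.range n, LDg (h (f^[i] x))) + (LDh x + -(LDh (f^[n] x))))
        (Icc (0:ℝ) 1)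
      ≤ eVariationOn (fun x => ∑ i ∈ Finset.range n, LDg (h (f^[i] x))) (Icc (0:ℝ) 1)
        + eVariationOn (fun x => LDh x + -(LDh (f^[n] x))) (Icc (0:ℝ) 1) := evar_add_le
    _ ≤ (∑ i ∈ Finset.range n, eVariationOn (fun x => LDg (h (f^[i] x))) (Icc (0:ℝ) 1))
        + (eVariationOn LDh (Icc (0:ℝ) 1)
          + eVariationOn (fun x => -(LDh (f^[n] x))) (Icc (0:ℝ) 1)) :=
        add_le_add (evar_sum_le _ _ _) evar_add_le
    _ ≤ (∑ _i ∈ Finset.range n, eVariationOn LDg (Icc (0:ℝ) 1))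
        + (eVariationOn LDh (Icc (0:ℝ) 1) + eVariationOn LDh (Icc (0:ℝ) 1)) := by
        refine add_le_add (Finset.sum_le_sum fun i _ => ?_) (add_le_add_right ?_ _)
        · exact eVariationOn.comp_le_of_monotoneOn LDg _ (hmono i) (hmaps i)
        · rw [show (fun x => -(LDh (f^[n] x))) = fun x => -((LDh ∘ f^[n]) x) from rfl,
            evar_neg]
          exact eVariationOn.comp_le_of_monotoneOn LDh _
            (monotoneOn_iterate hf.strictMonoOn.monotoneOn hf.mapsTo n)
            (fun x hx => iterate_mem hf.mapsTo n hx)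
    _ = (n : ℝ≥0∞) * eVariationOn LDg (Icc (0:ℝ) 1)
        + 2 * eVariationOn LDh (Icc (0:ℝ) 1) := by
        rw [Finset.sum_const, Finset.card_range, nsmul_eq_mul, two_mul]

end Conj
section DirA
variable {f finv h hinv : ℝ → ℝ}

lemma conj_evar_le (hf : IsBVDiffeo f finv) (hh : IsBVDiffeo h hinv) :
    eVariationOn (fun x => Real.log (deriv (h ∘ f ∘ hinv) x)) (Icc (0:ℝ) 1)
      ≤ eVariationOn (fun x => Real.log (deriv h x)) (Icc (0:ℝ) 1)
        + eVariationOn (fun x => Real.log (deriv f x)) (Icc (0:ℝ) 1)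
        + eVariationOn (fun x => Real.log (deriv h x)) (Icc (0:ℝ) 1) := by
  set LDh := fun x => Real.log (deriv h x) with hLDh
  set LDf := fun x => Real.log (deriv f x) with hLDf
  have hEq : EqOn (fun x => Real.log (deriv (h ∘ f ∘ hinv) x))
      (fun x => (LDh (f (hinv x)) + LDf (hinv x)) + -(LDh (hinv x))) (Icc (0:ℝ) 1) := by
    intro y hy
    show Real.log (deriv (h ∘ f ∘ hinv) y) = _
    rw [log_deriv_conj hh hf hy, hLDh, hLDf]
    ring
  rw [eVariationOn.eq_of_eqOn hEq]
  have hm1 : MonotoneOn (fun x => f (hinv x)) (Icc (0:ℝ) 1) := fun a ha b hb hab =>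
    hf.strictMonoOn.monotoneOn (hh.mapsTo_inv ha) (hh.mapsTo_inv hb)
      (hh.monotoneOn_inv ha hb hab)
  have hmap1 : MapsTo (fun x => f (hinv x)) (Icc (0:ℝ) 1) (Icc (0:ℝ) 1) := fun x hx =>
    hf.mapsTo (hh.mapsTo_inv hx)
  calc eVariationOn (fun x => (LDh (f (hinv x)) + LDf (hinv x)) + -(LDh (hinv x)))
        (Icc (0:ℝ) 1)
      ≤ (eVariationOn (fun x => LDh (f (hinv x))) (Icc (0:ℝ) 1)
          + eVariationOn (fun x => LDf (hinv x)) (Icc (0:ℝ) 1))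
        + eVariationOn (fun x => -(LDh (hinv x))) (Icc (0:ℝ) 1) :=
        le_trans evar_add_le (add_le_add_left evar_add_le _)
    _ ≤ _ := by
        refine add_le_add (add_le_add ?_ ?_) ?_
        · exact eVariationOn.comp_le_of_monotoneOn LDh _ hm1 hmap1
        · exact eVariationOn.comp_le_of_monotoneOn LDf _ hh.monotoneOn_inv hh.mapsTo_inv
        · rw [show (fun x => -(LDh (hinv x))) = fun x => -((LDh ∘ hinv) x) from rfl, evar_neg]
          exact eVariationOn.comp_le_of_monotoneOn LDh _ hh.monotoneOn_inv hh.mapsTo_inv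

lemma conj_bv (hf : IsBVDiffeo f finv) (hh : IsBVDiffeo h hinv) :
    eVariationOn (fun x => Real.log (deriv (h ∘ f ∘ hinv) x)) (Icc (0:ℝ) 1) ≠ ∞ := by
  intro htop
  have h1 := conj_evar_le hf hh
  rw [htop] at h1
  exact (ENNReal.add_ne_top.mpr ⟨ENNReal.add_ne_top.mpr ⟨hh.bv, hf.bv⟩, hh.bv⟩)
    (top_le_iff.mp h1)

lemma dirA {d : ℝ} (hf : IsBVDiffeo f finv)
    (hdist : Tendsto (fun n : ℕ => varLogD (f^[n]) / n) atTop (nhds d))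
    (hh : IsBVDiffeo h hinv) : d ≤ varLogD (h ∘ f ∘ hinv) := by
  set Vg := eVariationOn (fun x => Real.log (deriv (h ∘ f ∘ hinv) x)) (Icc (0:ℝ) 1) with hVg
  set Vh := eVariationOn (fun x => Real.log (deriv h x)) (Icc (0:ℝ) 1) with hVh
  have hVgfin : Vg ≠ ∞ := conj_bv hf hh
  have hVhfin : Vh ≠ ∞ := hh.bv
  have key : ∀ n : ℕ, varLogD (f^[n]) ≤ n * Vg.toReal + 2 * Vh.toReal := by
    intro n
    have h1 := varA hf hh n
    have hfin1 : (n : ℝ≥0∞) * Vg ≠ ∞ := ENNReal.mul_ne_top (ENNReal.natCast_ne_top n) hVgfin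
    have hfin2 : (2 : ℝ≥0∞) * Vh ≠ ∞ := ENNReal.mul_ne_top ENNReal.ofNat_ne_top hVhfin
    have h2 : ((n : ℝ≥0∞) * Vg + 2 * Vh) ≠ ∞ := ENNReal.add_ne_top.mpr ⟨hfin1, hfin2⟩
    calc varLogD (f^[n]) ≤ ((n : ℝ≥0∞) * Vg + 2 * Vh).toReal := ENNReal.toReal_mono h2 h1
      _ = n * Vg.toReal + 2 * Vh.toReal := by
          rw [ENNReal.toReal_add hfin1 hfin2, ENNReal.toReal_mul, ENNReal.toReal_mul]
          simp
  have hev : ∀ᶠ n : ℕ in atTop, varLogD (f^[n]) / n ≤ Vg.toReal + 2 * Vh.toReal / n := by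
    filter_upwards [eventually_ge_atTop 1] with n hn
    have hn' : (0:ℝ) < n := by exact_mod_cast Nat.lt_of_lt_of_le Nat.zero_lt_one hn
    rw [div_le_iff₀ hn']
    calc varLogD (f^[n]) ≤ n * Vg.toReal + 2 * Vh.toReal := key n
      _ = (Vg.toReal + 2 * Vh.toReal / n) * n := by field_simp
  have h0 : Tendsto (fun n : ℕ => 2 * Vh.toReal / n) atTop (nhds 0) := by
    have := tendsto_one_div_atTop_nhds_zero_nat.const_mul (2 * Vh.toReal)
    simpa [div_eq_mul_inv] using this
  have hlim : Tendsto (fun n : ℕ => Vg.toReal + 2 * Vh.toReal / n) atTop (nhds Vg.toReal) := by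
    simpa using tendsto_const_nhds.add h0
  exact le_of_tendsto_of_tendsto hdist hlim hev

end DirA
section Cont
variable {f finv : ℝ → ℝ}

lemma deriv_right_tendsto (hf : IsBVDiffeo f finv) {c : ℝ} (hc : c ∈ Icc (0:ℝ) 1) :
    Tendsto (deriv f) (nhdsWithin c (Ioc c 1)) (nhds (deriv f c)) := by
  rcases eq_or_lt_of_le hc.2 with h1 | hlt
  · rw [← h1]
    simp [Ioc_self, nhdsWithin_empty]
  obtain ⟨p, q, hp, hq, hpq⟩ :=
    hf.bv.locallyBoundedVariationOn.exists_monotoneOn_sub_monotoneOn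
  have hsub : Ioo c 1 ⊆ Icc (0:ℝ) 1 := fun x hx =>
    ⟨le_of_lt (lt_of_le_of_lt hc.1 hx.1), le_of_lt hx.2⟩
  have hnon : (Ioo c 1).Nonempty := nonempty_Ioo.2 hlt
  have hbp : BddBelow (p '' Ioo c 1) := by
    refine ⟨p c, ?_⟩
    rintro _ ⟨t, ht, rfl⟩
    exact hp hc (hsub ht) (le_of_lt ht.1)
  have hbq : BddBelow (q '' Ioo c 1) := by
    refine ⟨q c, ?_⟩
    rintro _ ⟨t, ht, rfl⟩
    exact hq hc (hsub ht) (le_of_lt ht.1)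
  have htp := MonotoneOn.tendsto_nhdsWithin_Ioo_right hnon (hp.mono hsub) hbp
  have htq := MonotoneOn.tendsto_nhdsWithin_Ioo_right hnon (hq.mono hsub) hbq
  set L := sInf (p '' Ioo c 1) - sInf (q '' Ioo c 1) with hL
  have hφ : Tendsto (fun x => Real.log (deriv f x)) (nhdsWithin c (Ioi c)) (nhds L) := by
    rw [hpq]
    exact htp.sub htq
  set r := Real.exp L with hr0
  have hrt : Tendsto (deriv f) (nhdsWithin c (Ioc c 1)) (nhds r) := by
    have h1 : Tendsto (fun x => Real.log (deriv f x)) (nhdsWithin c (Ioc c 1)) (nhds L) :=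
      hφ.mono_left (nhdsWithin_mono c Ioc_subset_Ioi_self)
    have h2 : Tendsto (fun x => Real.exp (Real.log (deriv f x)))
        (nhdsWithin c (Ioc c 1)) (nhds r) := (Real.continuous_exp.tendsto L).comp h1
    refine h2.congr' ?_
    filter_upwards [self_mem_nhdsWithin] with t ht
    exact Real.exp_log (hf.deriv_pos t ⟨le_trans hc.1 (le_of_lt ht.1), ht.2⟩)
  suffices hEq : r = deriv f c by rwa [hEq] at hrt
  by_contra hne
  set m := deriv f c with hm0
  set ε := |m - r| / 2 with hε
  have hmr : m ≠ r := fun hh => hne hh.symm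
  have hεpos : 0 < ε := by
    have : |m - r| > 0 := abs_pos.2 (sub_ne_zero.2 hmr)
    positivity
  have hev : ∀ᶠ t in nhdsWithin c (Ioc c 1), dist (deriv f t) r < ε :=
    Metric.tendsto_nhds.mp hrt ε hεpos
  obtain ⟨δ, hδpos, hδ⟩ := Metric.mem_nhdsWithin_iff.mp hev
  set b := min (c + δ/2) 1 with hb
  have hcb : c < b := lt_min (by linarith) hlt
  have hball : ∀ t ∈ Ioc c b, dist (deriv f t) r < ε := by
    intro t ht
    apply hδ
    constructor
    · rw [Metric.mem_ball, Real.dist_eq, abs_of_pos (by linarith [ht.1])]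
      have h3 : t ≤ c + δ/2 := le_trans ht.2 (min_le_left _ _)
      linarith
    · exact ⟨ht.1, le_trans ht.2 (min_le_right _ _)⟩
  have hDb : dist (deriv f b) r < ε := hball b ⟨hcb, le_refl b⟩
  rw [Real.dist_eq] at hDb
  have hDb' := abs_lt.mp hDb
  have hder : ∀ x ∈ Icc c b, HasDerivWithinAt f (deriv f x) (Icc c b) x := fun x _ =>
    (hf.diff x).hasDerivAt.hasDerivWithinAt
  rcases lt_or_gt_of_ne hmr with hlt2 | hgt2
  · -- m < r
    have habs : |m - r| = r - m := by rw [abs_of_neg (by linarith)]; ring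
    have h1 : m < (m + r)/2 := by linarith
    have h2 : (m + r)/2 < deriv f b := by
      rw [hε, habs] at hDb'
      linarith [hDb'.1]
    obtain ⟨t, ht, hteq⟩ := exists_hasDerivWithinAt_eq_of_gt_of_lt hcb.le hder h1 h2
    have := hball t ⟨ht.1, le_of_lt ht.2⟩
    rw [hteq, Real.dist_eq] at this
    have : |(m + r)/2 - r| = ε := by rw [hε, habs, abs_of_neg (by linarith)]; ring
    linarith [hball t ⟨ht.1, le_of_lt ht.2⟩, Real.dist_eq ((m+r)/2) r ▸ this]
  · -- r < m
    have habs : |m - r| = m - r := abs_of_pos (by linarith)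
    have h1 : deriv f b < (m + r)/2 := by
      rw [hε, habs] at hDb'
      linarith [hDb'.2]
    have h2 : (m + r)/2 < m := by linarith
    obtain ⟨t, ht, hteq⟩ := exists_hasDerivWithinAt_eq_of_lt_of_gt hcb.le hder h2 h1
    have h3 := hball t ⟨ht.1, le_of_lt ht.2⟩
    rw [hteq, Real.dist_eq] at h3
    have h4 : |(m + r)/2 - r| = ε := by rw [hε, habs, abs_of_pos (by linarith)]; ring
    linarith [h4 ▸ h3]
end Cont
section Cont2
variable {f finv : ℝ → ℝ}

lemma deriv_left_tendsto (hf : IsBVDiffeo f finv) {c : ℝ} (hc : c ∈ Icc (0:ℝ) 1) :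
    Tendsto (deriv f) (nhdsWithin c (Ico 0 c)) (nhds (deriv f c)) := by
  rcases eq_or_lt_of_le hc.1 with h1 | hlt
  · rw [← h1]
    simp [Ico_self, nhdsWithin_empty]
  obtain ⟨p, q, hp, hq, hpq⟩ :=
    hf.bv.locallyBoundedVariationOn.exists_monotoneOn_sub_monotoneOn
  have hsub : Ioo (0:ℝ) c ⊆ Icc (0:ℝ) 1 := fun x hx =>
    ⟨le_of_lt hx.1, le_trans (le_of_lt hx.2) hc.2⟩
  have hnon : (Ioo (0:ℝ) c).Nonempty := nonempty_Ioo.2 hlt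
  have hbp : BddAbove (p '' Ioo 0 c) := by
    refine ⟨p c, ?_⟩
    rintro _ ⟨t, ht, rfl⟩
    exact hp (hsub ht) hc (le_of_lt ht.2)
  have hbq : BddAbove (q '' Ioo 0 c) := by
    refine ⟨q c, ?_⟩
    rintro _ ⟨t, ht, rfl⟩
    exact hq (hsub ht) hc (le_of_lt ht.2)
  have htp := MonotoneOn.tendsto_nhdsWithin_Ioo_left hnon (hp.mono hsub) hbp
  have htq := MonotoneOn.tendsto_nhdsWithin_Ioo_left hnon (hq.mono hsub) hbq
  set L := sSup (p '' Ioo 0 c) - sSup (q '' Ioo 0 c) with hL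
  have hφ : Tendsto (fun x => Real.log (deriv f x)) (nhdsWithin c (Iio c)) (nhds L) := by
    rw [hpq]
    exact htp.sub htq
  set r := Real.exp L with hr0
  have hrt : Tendsto (deriv f) (nhdsWithin c (Ico 0 c)) (nhds r) := by
    have h1 : Tendsto (fun x => Real.log (deriv f x)) (nhdsWithin c (Ico 0 c)) (nhds L) :=
      hφ.mono_left (nhdsWithin_mono c Ico_subset_Iio_self)
    have h2 : Tendsto (fun x => Real.exp (Real.log (deriv f x)))
        (nhdsWithin c (Ico 0 c)) (nhds r) := (Real.continuous_exp.tendsto L).comp h1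
    refine h2.congr' ?_
    filter_upwards [self_mem_nhdsWithin] with t ht
    exact Real.exp_log (hf.deriv_pos t ⟨ht.1, le_trans (le_of_lt ht.2) hc.2⟩)
  suffices hEq : r = deriv f c by rwa [hEq] at hrt
  by_contra hne
  set m := deriv f c with hm0
  set ε := |m - r| / 2 with hε
  have hmr : m ≠ r := fun hh => hne hh.symm
  have hεpos : 0 < ε := by
    have : |m - r| > 0 := abs_pos.2 (sub_ne_zero.2 hmr)
    positivity
  have hev : ∀ᶠ t in nhdsWithin c (Ico 0 c), dist (deriv f t) r < ε :=
    Metric.tendsto_nhds.mp hrt ε hεpos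
  obtain ⟨δ, hδpos, hδ⟩ := Metric.mem_nhdsWithin_iff.mp hev
  set b := max (c - δ/2) 0 with hb
  have hcb : b < c := max_lt (by linarith) hlt
  have hball : ∀ t ∈ Ico b c, dist (deriv f t) r < ε := by
    intro t ht
    apply hδ
    constructor
    · rw [Metric.mem_ball, Real.dist_eq, abs_of_neg (by linarith [ht.2])]
      have h3 : c - δ/2 ≤ t := le_trans (le_max_left _ _) ht.1
      linarith
    · exact ⟨le_trans (le_max_right _ _) ht.1, ht.2⟩
  have hDb : dist (deriv f b) r < ε := hball b ⟨le_refl b, hcb⟩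
  rw [Real.dist_eq] at hDb
  have hDb' := abs_lt.mp hDb
  have hder : ∀ x ∈ Icc b c, HasDerivWithinAt f (deriv f x) (Icc b c) x := fun x _ =>
    (hf.diff x).hasDerivAt.hasDerivWithinAt
  rcases lt_or_gt_of_ne hmr with hlt2 | hgt2
  · -- m < r : deriv f b > (m+r)/2 > m = f' c : use of_lt_of_gt
    have habs : |m - r| = r - m := by rw [abs_of_neg (by linarith)]; ring
    have h1 : (m + r)/2 < deriv f b := by
      rw [hε, habs] at hDb'
      linarith [hDb'.1]
    have h2 : deriv f c < (m + r)/2 := by rw [← hm0]; linarith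
    obtain ⟨t, ht, hteq⟩ := exists_hasDerivWithinAt_eq_of_lt_of_gt hcb.le hder h1 h2
    have h3 := hball t ⟨le_of_lt ht.1, ht.2⟩
    rw [hteq, Real.dist_eq] at h3
    have h4 : |(m + r)/2 - r| = ε := by rw [hε, habs, abs_of_neg (by linarith)]; ring
    linarith [h4 ▸ h3]
  · -- r < m : deriv f b < (m+r)/2 < m = f' c : use of_gt_of_lt
    have habs : |m - r| = m - r := abs_of_pos (by linarith)
    have h1 : deriv f b < (m + r)/2 := by
      rw [hε, habs] at hDb'
      linarith [hDb'.2]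
    have h2 : (m + r)/2 < deriv f c := by rw [← hm0]; linarith
    obtain ⟨t, ht, hteq⟩ := exists_hasDerivWithinAt_eq_of_gt_of_lt hcb.le hder h1 h2
    have h3 := hball t ⟨le_of_lt ht.1, ht.2⟩
    rw [hteq, Real.dist_eq] at h3
    have h4 : |(m + r)/2 - r| = ε := by rw [hε, habs, abs_of_pos (by linarith)]; ring
    linarith [h4 ▸ h3]

lemma deriv_continuousOn (hf : IsBVDiffeo f finv) :
    ContinuousOn (deriv f) (Icc (0:ℝ) 1) := by
  intro c hc
  have hsub : Icc (0:ℝ) 1 ⊆ Ico 0 c ∪ (Ioc c 1 ∪ {c}) := by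
    intro t ht
    rcases lt_trichotomy t c with h | h | h
    · exact Or.inl ⟨ht.1, h⟩
    · exact Or.inr (Or.inr (by simp [h]))
    · exact Or.inr (Or.inl ⟨h, ht.2⟩)
  refine Tendsto.mono_left ?_ (nhdsWithin_mono c hsub)
  rw [nhdsWithin_union, nhdsWithin_union]
  rw [tendsto_sup]
  refine ⟨deriv_left_tendsto hf hc, ?_⟩
  rw [tendsto_sup]
  refine ⟨deriv_right_tendsto hf hc, ?_⟩
  rw [nhdsWithin_singleton]
  exact tendsto_pure_nhds (deriv f) c

end Cont2
section Construction
variable {f finv : ℝ → ℝ}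

noncomputable def clamp01 (t : ℝ) : ℝ := max 0 (min 1 t)

lemma clamp01_mem (t : ℝ) : clamp01 t ∈ Icc (0:ℝ) 1 :=
  ⟨le_max_left _ _, max_le zero_le_one (min_le_left _ _)⟩

lemma clamp01_eq {t : ℝ} (ht : t ∈ Icc (0:ℝ) 1) : clamp01 t = t := by
  rw [clamp01, min_eq_right ht.2, max_eq_right ht.1]

lemma clamp01_continuous : Continuous clamp01 :=
  continuous_const.max (continuous_const.min continuous_id)

lemma clamp01_of_ge {t : ℝ} (h : 1 ≤ t) : clamp01 t = 1 := by
  rw [clamp01, min_eq_left h, max_eq_right zero_le_one]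

lemma clamp01_of_le {t : ℝ} (h : t ≤ 0) : clamp01 t = 0 := by
  rw [clamp01, min_eq_right (le_trans h zero_le_one), max_eq_left h]

lemma deriv_iterate_continuousOn (hf : IsBVDiffeo f finv) (k : ℕ) :
    ContinuousOn (deriv (f^[k])) (Icc (0:ℝ) 1) := by
  induction k with
  | zero =>
    have : deriv (f^[0]) = fun _ => (1:ℝ) := by
      funext x; simp
    rw [this]; exact continuousOn_const
  | succ k ih =>
    have heq : deriv (f^[k+1]) = fun x => deriv f (f^[k] x) * deriv (f^[k]) x := by
      funext x
      rw [Function.iterate_succ', deriv_comp x (hf.diff _) (diff_iterate hf.diff k x)]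
    rw [heq]
    exact ((deriv_continuousOn hf).comp ((diff_iterate hf.diff k).continuous.continuousOn)
      (fun x hx => iterate_mem hf.mapsTo k hx)).mul ih

lemma evar_log_deriv_iterate_le (hf : IsBVDiffeo f finv) (k : ℕ) :
    eVariationOn (fun x => Real.log (deriv (f^[k]) x)) (Icc (0:ℝ) 1)
      ≤ (k : ℝ≥0∞) * eVariationOn (fun x => Real.log (deriv f x)) (Icc (0:ℝ) 1) := by
  set LDf := fun x => Real.log (deriv f x) with hLDf
  have hEq : EqOn (fun x => Real.log (deriv (f^[k]) x))
      (fun x => ∑ i ∈ Finset.range k, LDf (f^[i] x)) (Icc (0:ℝ) 1) := fun x hx =>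
    log_deriv_iterate hf.diff hf.mapsTo hf.deriv_pos k hx
  rw [eVariationOn.eq_of_eqOn hEq]
  calc eVariationOn (fun x => ∑ i ∈ Finset.range k, LDf (f^[i] x)) (Icc (0:ℝ) 1)
      ≤ ∑ i ∈ Finset.range k, eVariationOn (fun x => LDf (f^[i] x)) (Icc (0:ℝ) 1) :=
        evar_sum_le _ _ _
    _ ≤ ∑ _i ∈ Finset.range k, eVariationOn LDf (Icc (0:ℝ) 1) :=
        Finset.sum_le_sum fun i _ => eVariationOn.comp_le_of_monotoneOn LDf _
          (monotoneOn_iterate hf.strictMonoOn.monotoneOn hf.mapsTo i)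
          (fun x hx => iterate_mem hf.mapsTo i hx)
    _ = _ := by rw [Finset.sum_const, Finset.card_range, nsmul_eq_mul]

lemma isBVDiffeo_id : IsBVDiffeo (id : ℝ → ℝ) id := by
  refine ⟨differentiable_id, differentiable_id, rfl, rfl, fun x hx => hx, fun x hx => hx,
    fun x _ => rfl, fun x _ => rfl, fun x _ => by simp, ?_⟩
  have : (fun x : ℝ => Real.log (deriv id x)) = fun _ => (0:ℝ) := by
    funext x; simp
  rw [BoundedVariationOn, this, eVariationOn.constant_on]
  · exact ENNReal.zero_ne_top
  · rintro a ⟨_, _, rfl⟩ b ⟨_, _, rfl⟩; rfl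

lemma exists_conj (hf : IsBVDiffeo f finv) {n : ℕ} (hn : 1 ≤ n) :
    ∃ h hinv : ℝ → ℝ, IsBVDiffeo h hinv ∧
      varLogD (h ∘ f ∘ hinv) ≤ varLogD (f^[n]) / n := by
  have hnR : (0:ℝ) < n := by exact_mod_cast hn
  set W : ℝ → ℝ := fun t =>
    Real.exp ((n:ℝ)⁻¹ * ∑ k ∈ Finset.range n, Real.log (deriv (f^[k]) (clamp01 t))) with hW
  have hWcont : Continuous W := by
    apply Real.continuous_exp.comp
    apply continuous_const.mul
    apply continuous_finset_sum
    intro k _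
    have hk : ContinuousOn (fun x => Real.log (deriv (f^[k]) x)) (Icc (0:ℝ) 1) :=
      (deriv_iterate_continuousOn hf k).log
        (fun x hx => (deriv_iterate_pos hf.diff hf.mapsTo hf.deriv_pos k hx).ne')
    exact hk.comp_continuous clamp01_continuous clamp01_mem
  have hWpos : ∀ t, 0 < W t := fun t => Real.exp_pos _
  set D : ℝ := ∫ t in (0:ℝ)..1, W t with hD0
  have hD : 0 < D :=
    intervalIntegral.intervalIntegral_pos_of_pos (hWcont.intervalIntegrable 0 1) hWpos
      zero_lt_one
  set H : ℝ → ℝ := fun x => (∫ t in (0:ℝ)..x, W t) / D with hH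
  have hHd : ∀ x, HasDerivAt H (W x / D) x := fun x =>
    (intervalIntegral.integral_hasDerivAt_right (hWcont.intervalIntegrable 0 x)
      (hWcont.stronglyMeasurableAtFilter _ _) hWcont.continuousAt).div_const D
  have hHdiff : Differentiable ℝ H := fun x => (hHd x).differentiableAt
  have hHderiv : ∀ x, deriv H x = W x / D := fun x => (hHd x).deriv
  have hHpos : ∀ x, 0 < deriv H x := fun x => by
    rw [hHderiv]; exact div_pos (hWpos x) hD
  have hHmono : StrictMono H :=
    strictMono_of_deriv_pos hHpos
  have hH0 : H 0 = 0 := by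
    rw [hH]; simp
  have hH1 : H 1 = 1 := div_self hD.ne'
  have hHmaps : MapsTo H (Icc (0:ℝ) 1) (Icc (0:ℝ) 1) := by
    intro x hx
    constructor
    · rw [← hH0]; exact hHmono.monotone hx.1
    · rw [← hH1]; exact hHmono.monotone hx.2
  -- affine behavior outside [0,1]
  have htop : Tendsto H atTop atTop := by
    have h1 : Tendsto (fun x : ℝ => (D + (x - 1) * W 1) / D) atTop atTop := by
      apply Tendsto.atTop_div_const hD
      apply tendsto_atTop_add_const_left _ D
      apply Tendsto.atTop_mul_const (hWpos 1)
      exact tendsto_atTop_add_const_right _ (-1) tendsto_id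
    apply h1.congr'
    filter_upwards [eventually_ge_atTop (1:ℝ)] with x hx
    have hsplit : (∫ t in (0:ℝ)..1, W t) + (∫ t in (1:ℝ)..x, W t) = ∫ t in (0:ℝ)..x, W t :=
      intervalIntegral.integral_add_adjacent_intervals (hWcont.intervalIntegrable 0 1)
        (hWcont.intervalIntegrable 1 x)
    have hconst : (∫ t in (1:ℝ)..x, W t) = (x - 1) * W 1 := by
      rw [intervalIntegral.integral_congr (g := fun _ => W 1) ?_,
        intervalIntegral.integral_const, smul_eq_mul]
      intro t ht
      rw [uIcc_of_le hx] at ht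
      show W t = W 1
      rw [hW]
      simp only [clamp01_of_ge ht.1, clamp01_of_ge le_rfl]
    rw [hH]
    show (D + (x - 1) * W 1) / D = (∫ t in (0:ℝ)..x, W t) / D
    rw [← hsplit, hconst, hD0]
  have hbot : Tendsto H atBot atBot := by
    have h1 : Tendsto (fun x : ℝ => x * W 0 / D) atBot atBot :=
      Tendsto.atBot_div_const hD (Tendsto.atBot_mul_const (hWpos 0) tendsto_id)
    apply h1.congr'
    filter_upwards [eventually_le_atBot (0:ℝ)] with x hx
    have hconst : (∫ t in (0:ℝ)..x, W t) = x * W 0 := by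
      rw [intervalIntegral.integral_congr (g := fun _ => W 0) ?_,
        intervalIntegral.integral_const, smul_eq_mul, sub_zero]
      intro t ht
      rw [uIcc_of_ge hx] at ht
      show W t = W 0
      rw [hW]
      simp only [clamp01_of_le ht.2, clamp01_of_le le_rfl]
    rw [hH]
    show x * W 0 / D = (∫ t in (0:ℝ)..x, W t) / D
    rw [hconst]
  have hHsurj : Function.Surjective H := hHdiff.continuous.surjective htop hbot
  set G := StrictMono.orderIsoOfSurjective H hHmono hHsurj with hG
  set Hinv : ℝ → ℝ := fun y => G.symm y with hHinv
  have hri : ∀ y, H (Hinv y) = y := fun y => G.apply_symm_apply y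
  have hli : ∀ x, Hinv (H x) = x := fun x => G.symm_apply_apply x
  have hHinvCont : Continuous Hinv := (G.symm.toHomeomorph).continuous
  have hHinvD : ∀ y, HasDerivAt Hinv ((W (Hinv y) / D)⁻¹) y := fun y =>
    HasDerivAt.of_local_left_inverse hHinvCont.continuousAt (hHd (Hinv y))
      (div_pos (hWpos _) hD).ne' (Eventually.of_forall hri)
  have hHinvdiff : Differentiable ℝ Hinv := fun y => (hHinvD y).differentiableAt
  have hHinv0 : Hinv 0 = 0 := by nth_rewrite 1 [← hH0]; rw [hli]
  have hHinv1 : Hinv 1 = 1 := by nth_rewrite 1 [← hH1]; rw [hli]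
  have hHinvmono : Monotone Hinv := G.symm.monotone
  have hHinvmaps : MapsTo Hinv (Icc (0:ℝ) 1) (Icc (0:ℝ) 1) := by
    intro y hy
    constructor
    · rw [← hHinv0]; exact hHinvmono hy.1
    · rw [← hHinv1]; exact hHinvmono hy.2
  -- BV of log deriv H
  have hlogH : ∀ x ∈ Icc (0:ℝ) 1, Real.log (deriv H x)
      = (n:ℝ)⁻¹ * (∑ k ∈ Finset.range n, Real.log (deriv (f^[k]) x)) - Real.log D := by
    intro x hx
    rw [hHderiv, Real.log_div (hWpos x).ne' hD.ne', hW]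
    simp only [Real.log_exp, clamp01_eq hx]
  have hbvH : BoundedVariationOn (fun x => Real.log (deriv H x)) (Icc (0:ℝ) 1) := by
    rw [BoundedVariationOn,
      eVariationOn.eq_of_eqOn (fun x hx => hlogH x hx)]
    intro htop'
    have hle : eVariationOn
        (fun x => (n:ℝ)⁻¹ * (∑ k ∈ Finset.range n, Real.log (deriv (f^[k]) x)) - Real.log D)
        (Icc (0:ℝ) 1)
        ≤ ENNReal.ofReal (n:ℝ)⁻¹ * ∑ k ∈ Finset.range n,
          ((k : ℝ≥0∞) * eVariationOn (fun x => Real.log (deriv f x)) (Icc (0:ℝ) 1)) := by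
      calc eVariationOn _ (Icc (0:ℝ) 1)
          ≤ eVariationOn
            (fun x => (n:ℝ)⁻¹ * (∑ k ∈ Finset.range n, Real.log (deriv (f^[k]) x)))
            (Icc (0:ℝ) 1) := evar_sub_const_le _
        _ ≤ ENNReal.ofReal (n:ℝ)⁻¹ * eVariationOn
            (fun x => ∑ k ∈ Finset.range n, Real.log (deriv (f^[k]) x)) (Icc (0:ℝ) 1) :=
            evar_smul_le _ (by positivity)
        _ ≤ _ := by
            apply mul_le_mul_right
            exact le_trans (evar_sum_le _ _ _)
              (Finset.sum_le_sum fun k _ => evar_log_deriv_iterate_le hf k)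
    rw [htop'] at hle
    have hfin : ENNReal.ofReal (n:ℝ)⁻¹ * ∑ k ∈ Finset.range n,
        ((k : ℝ≥0∞) * eVariationOn (fun x => Real.log (deriv f x)) (Icc (0:ℝ) 1)) ≠ ∞ := by
      apply ENNReal.mul_ne_top ENNReal.ofReal_ne_top
      refine ENNReal.sum_ne_top.mpr fun k _ => ?_
      exact ENNReal.mul_ne_top (ENNReal.natCast_ne_top k) hf.bv
    exact hfin (top_le_iff.mp hle)
  have hHdiffeo : IsBVDiffeo H Hinv :=
    ⟨hHdiff, hHinvdiff, hH0, hH1, hHmaps, hHinvmaps, fun x _ => hli x, fun x _ => hri x,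
      fun x _ => hHpos x, hbvH⟩
  refine ⟨H, Hinv, hHdiffeo, ?_⟩
  -- value computation
  have hkey : EqOn (fun y => Real.log (deriv (H ∘ f ∘ Hinv) y))
      (fun y => (n:ℝ)⁻¹ * Real.log (deriv (f^[n]) (Hinv y))) (Icc (0:ℝ) 1) := by
    intro y hy
    have hx : Hinv y ∈ Icc (0:ℝ) 1 := hHinvmaps hy
    have hfx : f (Hinv y) ∈ Icc (0:ℝ) 1 := hf.mapsTo hx
    show Real.log (deriv (H ∘ f ∘ Hinv) y) = _
    rw [log_deriv_conj hHdiffeo hf hy]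
    rw [hHderiv, hHderiv, Real.log_div (hWpos _).ne' hD.ne',
      Real.log_div (hWpos _).ne' hD.ne', hW]
    simp only [Real.log_exp, clamp01_eq hx, clamp01_eq hfx]
    set x := Hinv y
    have hstep : ∀ k, Real.log (deriv (f^[k]) (f x)) =
        Real.log (deriv (f^[k+1]) x) - Real.log (deriv f x) := by
      intro k
      have hchain : deriv (f^[k+1]) x = deriv (f^[k]) (f x) * deriv f x := by
        rw [Function.iterate_succ, deriv_comp x (diff_iterate hf.diff k _) (hf.diff x)]
      rw [hchain, Real.log_mul (deriv_iterate_pos hf.diff hf.mapsTo hf.deriv_pos k hfx).ne'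
        (hf.deriv_pos x hx).ne']
      ring
    have hsum : ∑ k ∈ Finset.range n, Real.log (deriv (f^[k]) (f x))
        = (∑ k ∈ Finset.range n, Real.log (deriv (f^[k+1]) x))
          - n * Real.log (deriv f x) := by
      rw [Finset.sum_congr rfl (fun k _ => hstep k), Finset.sum_sub_distrib,
        Finset.sum_const, Finset.card_range, nsmul_eq_mul]
    have htel : (∑ k ∈ Finset.range n, Real.log (deriv (f^[k+1]) x))
        - (∑ k ∈ Finset.range n, Real.log (deriv (f^[k]) x))
        = Real.log (deriv (f^[n]) x) := by
      have := Finset.sum_range_sub (fun k => Real.log (deriv (f^[k]) x)) n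
      rw [Finset.sum_sub_distrib] at this
      rw [this]
      simp
    field_simp
    nlinarith [hsum, htel]
  rw [varLogD, eVariationOn.eq_of_eqOn hkey]
  have hc1 : eVariationOn (fun y => (n:ℝ)⁻¹ * Real.log (deriv (f^[n]) (Hinv y)))
      (Icc (0:ℝ) 1)
      ≤ ENNReal.ofReal (n:ℝ)⁻¹ * eVariationOn (fun x => Real.log (deriv (f^[n]) x))
        (Icc (0:ℝ) 1) := by
    calc eVariationOn (fun y => (n:ℝ)⁻¹ * Real.log (deriv (f^[n]) (Hinv y))) (Icc (0:ℝ) 1)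
        ≤ ENNReal.ofReal (n:ℝ)⁻¹ * eVariationOn
          (fun y => Real.log (deriv (f^[n]) (Hinv y))) (Icc (0:ℝ) 1) :=
          evar_smul_le _ (by positivity)
      _ ≤ _ := by
          apply mul_le_mul_right
          exact eVariationOn.comp_le_of_monotoneOn _ _
            (hHinvmono.monotoneOn _) hHinvmaps
  have hfinn : eVariationOn (fun x => Real.log (deriv (f^[n]) x)) (Icc (0:ℝ) 1) ≠ ∞ := by
    intro ht
    have := evar_log_deriv_iterate_le hf n
    rw [ht] at this
    exact (ENNReal.mul_ne_top (ENNReal.natCast_ne_top n) hf.bv) (top_le_iff.mp this)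
  calc (eVariationOn (fun y => (n:ℝ)⁻¹ * Real.log (deriv (f^[n]) (Hinv y)))
        (Icc (0:ℝ) 1)).toReal
      ≤ (ENNReal.ofReal (n:ℝ)⁻¹ * eVariationOn (fun x => Real.log (deriv (f^[n]) x))
        (Icc (0:ℝ) 1)).toReal :=
        ENNReal.toReal_mono (ENNReal.mul_ne_top ENNReal.ofReal_ne_top hfinn) hc1
    _ = varLogD (f^[n]) / n := by
        rw [ENNReal.toReal_mul, ENNReal.toReal_ofReal (by positivity), varLogD]
        rw [div_eq_inv_mul]

end Construction

/-- For a C¹⁺ᵇᵛ diffeomorphism `f` of `[0,1]`,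
`dist_∞(f) = inf { var(log D(h∘f∘h⁻¹)) : h an orientation-preserving C¹⁺ᵇᵛ diffeo }`. -/
theorem stmt_10 (f finv : ℝ → ℝ) (hf : IsBVDiffeo f finv)
    (d : ℝ)
    (hdist : Tendsto (fun n : ℕ => varLogD (f^[n]) / n) atTop (nhds d)) :
    d = sInf {v : ℝ | ∃ h hinv : ℝ → ℝ,
      IsBVDiffeo h hinv ∧ v = varLogD (h ∘ f ∘ hinv)} := by
  set S := {v : ℝ | ∃ h hinv : ℝ → ℝ,
    IsBVDiffeo h hinv ∧ v = varLogD (h ∘ f ∘ hinv)} with hS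
  have hSne : S.Nonempty := ⟨varLogD (id ∘ f ∘ id), id, id, isBVDiffeo_id, rfl⟩
  have hlb : ∀ v ∈ S, d ≤ v := by
    rintro v ⟨h, hinv, hd', rfl⟩
    exact dirA hf hdist hd'
  apply le_antisymm
  · exact le_csInf hSne hlb
  · have hBdd : BddBelow S := ⟨d, hlb⟩
    have hev : ∀ᶠ n : ℕ in atTop, sInf S ≤ varLogD (f^[n]) / n := by
      filter_upwards [eventually_ge_atTop 1] with n hn
      obtain ⟨h, hinv, hd', hle⟩ := exists_conj hf hn
      exact le_trans (csInf_le hBdd ⟨h, hinv, hd', rfl⟩) hle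
    exact ge_of_tendsto hdist hev
end

section
/- Define h_n : [0,1] → [0,1] by h_n(0)=0 and Dh_n(x) = (∏_{i=1}^{n-1} Df^i(x))^{1/n} / ∫₀¹ (∏_{i=1}^{n-1} Df^i(t))^{1/n} dt, where f is a C¹ diffeomorphism of [0,1]. Then log D(h_n ∘ f ∘ h_n⁻¹)(x) = (1/n) · log Df^n(h_n⁻¹(x)) for all x ∈ [0,1]. -/
open Filter Set

/-- Key computation for the conjugators `h_n`: if `h(0) = 0` and
`Dh(x) = (∏_{i=1}^{n-1} Dfⁱ(x))^{1/n} / ∫₀¹ (∏_{i=1}^{n-1} Dfⁱ(t))^{1/n} dt`,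
then `log D(h∘f∘h⁻¹)(x) = (1/n)·log Dfⁿ(h⁻¹(x))` on `[0,1]`. -/
theorem stmt_11 (f h hinv : ℝ → ℝ) (n : ℕ) (hn : 1 ≤ n)
    (hfd : Differentiable ℝ f)
    (hf0 : f 0 = 0) (hf1 : f 1 = 1)
    (hmapsf : MapsTo f (Icc (0 : ℝ) 1) (Icc (0 : ℝ) 1))
    (hposf : ∀ x ∈ Icc (0 : ℝ) 1, 0 < deriv f x)
    (hhd : Differentiable ℝ h) (hinvd : Differentiable ℝ hinv)
    (hh0 : h 0 = 0)
    (hDh : ∀ x ∈ Icc (0 : ℝ) 1, deriv h x =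
        (∏ i ∈ Finset.Ico 1 n, deriv (f^[i]) x) ^ ((1 : ℝ) / n)
          / ∫ t in (0 : ℝ)..1, (∏ i ∈ Finset.Ico 1 n, deriv (f^[i]) t) ^ ((1 : ℝ) / n))
    (hmapsinv : MapsTo hinv (Icc (0 : ℝ) 1) (Icc (0 : ℝ) 1))
    (hli : ∀ x ∈ Icc (0 : ℝ) 1, hinv (h x) = x)
    (hri : ∀ x ∈ Icc (0 : ℝ) 1, h (hinv x) = x)
    (x : ℝ) (hx : x ∈ Icc (0 : ℝ) 1) :
    Real.log (deriv (h ∘ f ∘ hinv) x)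
      = (1 / (n : ℝ)) * Real.log (deriv (f^[n]) (hinv x)) := by
  set y := hinv x with hy_def
  have hy : y ∈ Icc (0:ℝ) 1 := hmapsinv hx
  have hfy : f y ∈ Icc (0:ℝ) 1 := hmapsf hy
  have hitd : ∀ m : ℕ, Differentiable ℝ (f^[m]) := fun m => hfd.iterate m
  -- chain rule for iterates
  have hchain : ∀ m : ℕ, ∀ z : ℝ, deriv (f^[m+1]) z = deriv (f^[m]) (f z) * deriv f z := by
    intro m z
    rw [Function.iterate_succ]
    exact deriv_comp z ((hitd m) (f z)) (hfd z)
  -- positivity of derivatives of iterates on [0,1]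
  have hpos : ∀ m : ℕ, ∀ z ∈ Icc (0:ℝ) 1, 0 < deriv (f^[m]) z := by
    intro m
    induction m with
    | zero => intro z hz; simp
    | succ m ih =>
      intro z hz
      rw [hchain]
      exact mul_pos (ih _ (hmapsf hz)) (hposf z hz)
  -- key algebraic identity
  have key : ∀ m : ℕ, ∀ z : ℝ,
      (∏ i ∈ Finset.Ico 1 m, deriv (f^[i]) (f z)) * (deriv f z) ^ m
        = deriv (f^[m]) z * ∏ i ∈ Finset.Ico 1 m, deriv (f^[i]) z := by
    intro m z
    induction m with
    | zero => simp
    | succ m ih =>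
      rcases Nat.eq_zero_or_pos m with rfl | hm
      · simp [Function.iterate_one]
      · rw [Finset.prod_Ico_succ_top hm, Finset.prod_Ico_succ_top hm, pow_succ, hchain m z]
        linear_combination (deriv (f^[m]) (f z) * deriv f z) * ih
  -- inverse derivative identity
  have hinvderiv : deriv h y * deriv hinv x = 1 := by
    have h1 : HasDerivWithinAt (h ∘ hinv) (deriv h y * deriv hinv x) (Icc 0 1) x :=
      (((hhd y).hasDerivAt.comp x (hinvd x).hasDerivAt)).hasDerivWithinAt
    have h2 : HasDerivWithinAt (h ∘ hinv) 1 (Icc 0 1) x := by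
      have hid : HasDerivWithinAt (fun z : ℝ => z) 1 (Icc 0 1) x :=
        (hasDerivAt_id x).hasDerivWithinAt
      exact hid.congr (fun z hz => hri z hz) (hri x hx)
    have hu : UniqueDiffWithinAt ℝ (Icc (0:ℝ) 1) x := (uniqueDiffOn_Icc one_pos) x hx
    exact (h1.derivWithin hu).symm.trans (h2.derivWithin hu)
  set c := ∫ t in (0:ℝ)..1, (∏ i ∈ Finset.Ico 1 n, deriv (f^[i]) t) ^ ((1:ℝ)/n) with hc
  have hPy : 0 < ∏ i ∈ Finset.Ico 1 n, deriv (f^[i]) y :=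
    Finset.prod_pos fun i _ => hpos i y hy
  have hPfy : 0 < ∏ i ∈ Finset.Ico 1 n, deriv (f^[i]) (f y) :=
    Finset.prod_pos fun i _ => hpos i (f y) hfy
  have hdfy : 0 < deriv f y := hposf y hy
  have hDny : 0 < deriv (f^[n]) y := hpos n y hy
  have hhy : deriv h y ≠ 0 := left_ne_zero_of_mul_eq_one hinvderiv
  have hc0 : c ≠ 0 := by
    intro h0
    rw [hDh y hy, h0, div_zero] at hhy
    exact hhy rfl
  -- compute the derivative of the conjugate
  have hcomp : deriv (h ∘ f ∘ hinv) x = deriv h (f y) * (deriv f y * deriv hinv x) := by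
    rw [deriv_comp x (hhd _) ((hfd _).comp x (hinvd _)),
        deriv_comp x (hfd _) (hinvd _)]
    simp [Function.comp, mul_assoc]
    rfl
  have hinvx : deriv hinv x = c / (∏ i ∈ Finset.Ico 1 n, deriv (f^[i]) y) ^ ((1:ℝ)/n) := by
    have := hinvderiv
    rw [hDh y hy] at this
    field_simp at this ⊢
    nlinarith [this, Real.rpow_pos_of_pos hPy ((1:ℝ)/n)]
  have hPy' : (0:ℝ) < (∏ i ∈ Finset.Ico 1 n, deriv (f^[i]) y) ^ ((1:ℝ)/n) :=
    Real.rpow_pos_of_pos hPy _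
  have hval : deriv (h ∘ f ∘ hinv) x
      = (∏ i ∈ Finset.Ico 1 n, deriv (f^[i]) (f y)) ^ ((1:ℝ)/n) * deriv f y
        / (∏ i ∈ Finset.Ico 1 n, deriv (f^[i]) y) ^ ((1:ℝ)/n) := by
    rw [hcomp, hDh (f y) hfy, hinvx]
    field_simp
  have hn0 : (n:ℝ) ≠ 0 := Nat.cast_ne_zero.mpr (by omega)
  have hrw : deriv (h ∘ f ∘ hinv) x = (deriv (f^[n]) y) ^ ((1:ℝ)/n) := by
    rw [hval]
    have hDn : deriv (f^[n]) y
        = (∏ i ∈ Finset.Ico 1 n, deriv (f^[i]) (f y)) * (deriv f y) ^ n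
          / ∏ i ∈ Finset.Ico 1 n, deriv (f^[i]) y := by
      rw [key n y]; field_simp
    rw [hDn, Real.div_rpow (by positivity) hPy.le,
        Real.mul_rpow hPfy.le (by positivity)]
    congr 1
    congr 1
    rw [← Real.rpow_natCast (deriv f y) n, ← Real.rpow_mul hdfy.le]
    rw [mul_one_div_cancel hn0, Real.rpow_one]
  rw [hrw, Real.log_rpow hDny]
end
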